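/- arXiv:1911.00513 — 12 statements merged into one kernel-verified Lean document; each statement's English description precedes it below -/
import Mathlib

section
/- For every n ≥ 1, the linear map A_{n,1/2} : ℝ^{B_n} → ℝ^{{0,1}^n} has rank 2^{n−1}, and hence its kernel has dimension |B_n| − 2^{n−1}. -/
open Finset

/-- The divide-and-color matrix `A_{n,p}`: entry at configuration `ρ` and partition `σ` is
`p^{c(σ,ρ)}(1-p)^{‖σ‖-c(σ,ρ)}` if `ρ` is constant on every block of `σ`, and `0` otherwise. -/
noncomputable def colorMatrix (n : ℕ) (p : ℝ) :
    Matrix (Fin n → Bool) (Finpartition (univ : Finset (Fin n))) ℝ :=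
  fun ρ σ =>
    if ∀ B ∈ σ.parts, ∀ i ∈ B, ∀ j ∈ B, ρ i = ρ j then
      p ^ (σ.parts.filter (fun B => ∀ i ∈ B, ρ i = true)).card *
        (1 - p) ^ (σ.parts.card - (σ.parts.filter (fun B => ∀ i ∈ B, ρ i = true)).card)
    else 0

/-- The induced linear map `A_{n,p} : ℝ^{B_n} → ℝ^{{0,1}^n}`. -/
noncomputable def colorMap (n : ℕ) (p : ℝ) :
    ((Finpartition (univ : Finset (Fin n))) → ℝ) →ₗ[ℝ] ((Fin n → Bool) → ℝ) :=
  (colorMatrix n p).mulVecLin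

/-!
At `p = 1/2` the column of `σ` is `2^{-‖σ‖}` times the indicator of the colorings that are
constant on the blocks of `σ`. That set is closed under flipping all colors, so the range consists
of flip-invariant functions, a space of dimension `2^{n-1}`. Conversely, the column of the partition
of `[n]` into the level sets of `ρ` is (up to scaling) the indicator of the colorings factoring
through `ρ`: these are `ρ`, its complement `ρᶜ` and, when `ρ` is not constant, the two constant
colorings. Subtracting the column of the one-block partition leaves `δ_ρ + δ_{ρᶜ}`, and these
vectors span the flip-invariant functions. The kernel follows by rank–nullity.
-/

open Function

theorem ite_or_eq_add_ite {M : Type*} [AddZeroClass M] {p q : Prop} [Decidable p] [Decidable q]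
    (a : M) (h : p → ¬q) :
    (if p ∨ q then a else 0) = (if p then a else 0) + if q then a else 0 := by
  by_cases hp : p <;> by_cases hq : q <;> simp_all

section FactorsThrough

variable {α β γ : Type*}

theorem Finpartition.forall_mem_ofSetoid_ker_parts_iff [Fintype α] [DecidableEq α] (ρ : α → β)
    [DecidableRel (Setoid.ker ρ).r] (τ : α → γ) :
    (∀ B ∈ (Finpartition.ofSetoid (Setoid.ker ρ)).parts, ∀ i ∈ B, ∀ j ∈ B, τ i = τ j) ↔
      τ.FactorsThrough ρ := by
  set P := Finpartition.ofSetoid (Setoid.ker ρ)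
  refine ⟨fun h i j hij => ?_, fun h B hB i hi j hj => h ?_⟩
  · exact h _ (P.part_mem.2 (mem_univ i)) i (P.mem_part (mem_univ i)) j
      (Finpartition.mem_part_ofSetoid_iff_rel.2 hij)
  · rw [← P.part_eq_of_mem hB hi] at hj
    exact Finpartition.mem_part_ofSetoid_iff_rel.1 hj

theorem factorsThrough_iff_of_const {ρ : α → β} (τ : α → γ) (hρ : ∀ i j, ρ i = ρ j) :
    τ.FactorsThrough ρ ↔ ∀ i j, τ i = τ j :=
  ⟨fun h i j => h (hρ i j), fun h i j _ => h i j⟩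

theorem factorsThrough_iff_eq_or_eq_compl_or_const {ρ τ : α → Bool} :
    τ.FactorsThrough ρ ↔ τ = ρ ∨ τ = ρᶜ ∨ ∀ i j, τ i = τ j := by
  refine ⟨fun h => ?_, ?_⟩
  · obtain ⟨e, rfl⟩ := (factorsThrough_iff τ).1 h
    rcases (by decide : ∀ e : Bool → Bool,
      e = id ∨ e = not ∨ e = (fun _ => true) ∨ e = fun _ => false) e with rfl | rfl | rfl | rfl
    · exact .inl rfl
    · exact .inr (.inl rfl)
    all_goals exact .inr (.inr fun _ _ => rfl)
  · rintro (rfl | rfl | h) i j hij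
    · exact hij
    · simp [hij]
    · exact h i j

theorem eq_or_eq_compl_of_const [Nonempty α] {ρ τ : α → Bool} (hρ : ∀ i j, ρ i = ρ j)
    (hτ : ∀ i j, τ i = τ j) : τ = ρ ∨ τ = ρᶜ := by
  obtain ⟨a⟩ := ‹Nonempty α›
  rcases Bool.eq_or_eq_not (τ a) (ρ a) with h | h
  · exact .inl <| funext fun i => by rw [hτ i a, h, hρ a i]
  · exact .inr <| funext fun i => by rw [hτ i a, h, hρ a i]; rfl

end FactorsThrough

section FlipInvariant

variable {α : Type*} [Fintype α]

open scoped Classical in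
theorem pair_eq_indicator_of_const [Nonempty α] {ρ : α → Bool} (hρ : ∀ i j, ρ i = ρ j) :
    (Pi.single ρ 1 + Pi.single ρᶜ 1 : (α → Bool) → ℝ) =
      fun τ => if τ.FactorsThrough ρ then 1 else 0 := by
  funext τ
  have hiff : τ.FactorsThrough ρ ↔ τ = ρ ∨ τ = ρᶜ := by
    rw [factorsThrough_iff_of_const τ hρ]
    refine ⟨eq_or_eq_compl_of_const hρ, ?_⟩
    rintro (rfl | rfl) i j
    · exact hρ i j
    · exact congrArg (!·) (hρ i j)
  rw [if_congr hiff rfl rfl, ite_or_eq_add_ite _ fun h h' => ne_compl_self (h.symm.trans h')]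
  simp only [Pi.add_apply, Pi.single_apply]

open scoped Classical in
theorem pair_eq_indicator_sub_of_not_const {ρ : α → Bool} (hρ : ¬∀ i j, ρ i = ρ j) :
    (Pi.single ρ 1 + Pi.single ρᶜ 1 : (α → Bool) → ℝ) =
      (fun τ => if τ.FactorsThrough ρ then 1 else 0) -
        fun τ => if τ.FactorsThrough (fun _ : α => true) then 1 else 0 := by
  funext τ
  have : Nonempty α := by by_contra h; exact hρ fun i => (h ⟨i⟩).elim
  have hρ' : ¬∀ i j, ρᶜ i = ρᶜ j := fun h => hρ fun i j => by simpa using h i j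
  rw [Pi.sub_apply, eq_sub_iff_add_eq, factorsThrough_iff_of_const τ fun _ _ => rfl,
    if_congr factorsThrough_iff_eq_or_eq_compl_or_const rfl rfl, ite_or_eq_add_ite, ite_or_eq_add_ite,
    ← add_assoc]
  · simp only [Pi.add_apply, Pi.single_apply]
    -- the two sides differ only in the `Decidable` instances of the last condition
    congr
  · rintro rfl; exact hρ'
  · rintro rfl (h | h)
    · exact ne_compl_self h
    · exact hρ h

variable (α) in
def flipInvariant : Submodule ℝ ((α → Bool) → ℝ) where
  carrier := {g | ∀ ρ, g ρᶜ = g ρ}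
  add_mem' ha hb ρ := by simp only [Pi.add_apply, ha ρ, hb ρ]
  zero_mem' _ := rfl
  smul_mem' c g hg ρ := by simp only [Pi.smul_apply, hg ρ]

theorem flipInvariant_le_span_pair [DecidableEq α] :
    flipInvariant α ≤
      Submodule.span ℝ (Set.range fun ρ : α → Bool => Pi.single ρ 1 + Pi.single ρᶜ 1) := by
  intro g hg
  have hsum (h : (α → Bool) → ℝ) : ∑ ρ, h ρ • Pi.single ρ (1 : ℝ) = h := by
    simp_rw [← Pi.single_smul', smul_eq_mul, mul_one]
    exact LinearMap.sum_single_apply _ h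
  have hflip : ∑ ρ, g ρ • Pi.single ρᶜ (1 : ℝ) = g := by
    rw [← Equiv.sum_comp (compl_involutive.toPerm _)]
    simpa [hg _] using hsum g
  have hdecomp : g = (1 / 2 : ℝ) • ∑ ρ, g ρ • (Pi.single ρ 1 + Pi.single ρᶜ 1) := by
    simp_rw [smul_add, sum_add_distrib, hsum, hflip]
    module
  rw [hdecomp]
  exact Submodule.smul_mem _ _ <| Submodule.sum_mem _ fun ρ _ =>
    Submodule.smul_mem _ _ <| Submodule.subset_span ⟨ρ, rfl⟩

end FlipInvariant

def flipInvariantEquiv (m : ℕ) : flipInvariant (Fin (m + 1)) ≃ₗ[ℝ] ((Fin m → Bool) → ℝ) where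
  toFun g σ := g.1 (Fin.cons true σ)
  map_add' _ _ := rfl
  map_smul' _ _ := rfl
  invFun h := ⟨fun τ => if τ 0 then h (Fin.tail τ) else h (Fin.tail τᶜ), fun τ => by
    cases hτ : τ 0 <;> simp [hτ]⟩
  left_inv g := by
    have hcons (τ : Fin (m + 1) → Bool) (h : τ 0 = true) : Fin.cons true (Fin.tail τ) = τ :=
      h ▸ Fin.cons_self_tail τ
    ext τ
    cases hτ : τ 0
    · simpa [hτ, hcons τᶜ (by simp [hτ])] using g.2 τ
    · simp [hτ, hcons τ hτ]
  right_inv h := by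
    ext σ
    simp

theorem finrank_flipInvariant (m : ℕ) :
    Module.finrank ℝ (flipInvariant (Fin (m + 1))) = 2 ^ m := by
  simp [(flipInvariantEquiv m).finrank_eq]

section ColorMap

variable {n : ℕ}

theorem colorMatrix_half_apply (ρ : Fin n → Bool) (σ : Finpartition (univ : Finset (Fin n))) :
    colorMatrix n (1 / 2) ρ σ =
      if ∀ B ∈ σ.parts, ∀ i ∈ B, ∀ j ∈ B, ρ i = ρ j then (1 / 2 : ℝ) ^ #σ.parts else 0 := by
  refine if_congr Iff.rfl ?_ rfl
  rw [show (1 - 1 / 2 : ℝ) = 1 / 2 by norm_num, ← pow_add,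
    Nat.add_sub_cancel' (card_filter_le _ _)]

theorem colorMap_half_single (σ : Finpartition (univ : Finset (Fin n))) :
    colorMap n (1 / 2) (Pi.single σ (2 ^ #σ.parts)) =
      fun τ => if ∀ B ∈ σ.parts, ∀ i ∈ B, ∀ j ∈ B, τ i = τ j then 1 else 0 := by
  funext τ
  simp only [colorMap, Matrix.mulVecLin_apply, Matrix.mulVec_single, Pi.smul_apply,
    Matrix.col_apply, op_smul_eq_mul, colorMatrix_half_apply]
  split_ifs
  · rw [← mul_pow]; norm_num
  · exact zero_mul _

open scoped Classical in
theorem factorsThrough_indicator_mem_range_colorMap_half (ρ : Fin n → Bool) :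
    (fun τ => if τ.FactorsThrough ρ then (1 : ℝ) else 0) ∈ LinearMap.range (colorMap n (1 / 2)) := by
  refine ⟨_, (colorMap_half_single (Finpartition.ofSetoid (Setoid.ker ρ))).trans ?_⟩
  funext τ
  exact if_congr (Finpartition.forall_mem_ofSetoid_ker_parts_iff ρ τ) rfl rfl

theorem pair_mem_range_colorMap_half (hn : 1 ≤ n) (ρ : Fin n → Bool) :
    Pi.single ρ 1 + Pi.single ρᶜ 1 ∈ LinearMap.range (colorMap n (1 / 2)) := by
  have : Nonempty (Fin n) := ⟨⟨0, hn⟩⟩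
  by_cases hρ : ∀ i j, ρ i = ρ j
  · rw [pair_eq_indicator_of_const hρ]
    exact factorsThrough_indicator_mem_range_colorMap_half ρ
  · rw [pair_eq_indicator_sub_of_not_const hρ]
    exact sub_mem (factorsThrough_indicator_mem_range_colorMap_half ρ)
      (factorsThrough_indicator_mem_range_colorMap_half _)

theorem range_colorMap_half_le_flipInvariant :
    LinearMap.range (colorMap n (1 / 2)) ≤ flipInvariant (Fin n) := by
  rintro _ ⟨v, rfl⟩ ρ
  show ∑ σ, colorMatrix n (1 / 2) ρᶜ σ * v σ = ∑ σ, colorMatrix n (1 / 2) ρ σ * v σ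
  refine sum_congr rfl fun σ _ => congrArg (· * v σ) ?_
  simp only [colorMatrix_half_apply, Pi.compl_apply, Bool.compl_eq_bnot, Bool.not_inj_iff]

theorem range_colorMap_half (hn : 1 ≤ n) :
    LinearMap.range (colorMap n (1 / 2)) = flipInvariant (Fin n) :=
  range_colorMap_half_le_flipInvariant.antisymm <| flipInvariant_le_span_pair.trans <|
    Submodule.span_le.2 <| Set.range_subset_iff.2 (pair_mem_range_colorMap_half hn)

end ColorMap

/-- for `n ≥ 1`, `A_{n,1/2}` has rank `2^{n-1}` and nullity `|B_n| - 2^{n-1}`. -/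
theorem rank_colorMap_half (n : ℕ) (hn : 1 ≤ n) :
    Module.finrank ℝ (LinearMap.range (colorMap n (1/2))) = 2 ^ (n - 1) ∧
    Module.finrank ℝ (LinearMap.ker (colorMap n (1/2))) =
      Fintype.card (Finpartition (univ : Finset (Fin n))) - 2 ^ (n - 1) := by
  have hrank : Module.finrank ℝ (LinearMap.range (colorMap n (1 / 2))) = 2 ^ (n - 1) := by
    obtain ⟨m, rfl⟩ := Nat.exists_eq_add_of_le' hn
    rw [range_colorMap_half hn, finrank_flipInvariant, Nat.add_sub_cancel]
  have hsum := LinearMap.finrank_range_add_finrank_ker (colorMap n (1 / 2))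
  rw [Module.finrank_fintype_fun_eq_card, hrank] at hsum
  exact ⟨hrank, by omega⟩
end

section
/- For every n ≥ 1 and every p ∈ (0,1) with p ≠ 1/2, the linear map A_{n,p} : ℝ^{B_n} → ℝ^{{0,1}^n} has rank 2^n − n, and hence its kernel has dimension |B_n| − (2^n − n). -/
/-!
Pair a column `σ` of `A_{n,p}` with the centred monomial `χ_T(ρ) = ∏_{i ∈ T} (ρ_i - p)`. Since the
blocks of `σ` are coloured independently, the pairing factors as `∏_{B ∈ σ} m_{|B ∩ T|}`, where
`m_k = E[(X - p)^k]` for `X ~ Bernoulli(p)`. As `m_1 = 0`, the `n` independent functionals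
`χ_{i}` vanish on the range, so the rank is at most `2^n - n`. Conversely, for `|S| ≠ 1` let `π_S`
consist of the block `S` and singletons: the pairing of `χ_T` with the column `π_S` vanishes unless
`T ⊆ S`, and for `T = S` it is `m_{|S|}`, which is nonzero because `p ≠ 1/2` (for odd `k ≥ 3`,
`m_k = p(1-p)((1-p)^{k-1} - p^{k-1})`). This triangularity makes these `2^n - n` columns
linearly independent.
-/

open Finset

open scoped Matrix

theorem linearIndependent_of_pairing_triangular {ι R M : Type*} [Fintype ι] [PartialOrder ι]
    [Ring R] [NoZeroDivisors R] [AddCommGroup M] [Module R M] (v : ι → M) (f : ι → M →ₗ[R] R)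
    (h_tri : ∀ i j, f i (v j) ≠ 0 → i ≤ j) (h_diag : ∀ i, f i (v i) ≠ 0) :
    LinearIndependent R v := by
  rw [Fintype.linearIndependent_iff]
  intro g hg i
  induction i using WellFoundedGT.induction with
  | _ i IH =>
  have hfi : ∑ j, g j * f i (v j) = 0 := by simpa using congrArg (f i) hg
  rw [sum_eq_single i] at hfi
  · exact (mul_eq_zero.1 hfi).resolve_right (h_diag i)
  · intro j _ hji
    by_cases hij : i ≤ j
    · rw [IH j (lt_of_le_of_ne hij (Ne.symm hji)), zero_mul]
    · rw [not_imp_comm.1 (h_tri i j) hij, mul_zero]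
  · simp

namespace Finpartition

variable {α β : Type*} [Fintype α] [DecidableEq α] (P : Finpartition (univ : Finset α))

def liftParts (η : P.parts → β) (i : α) : β :=
  η ⟨P.part i, P.part_mem.2 (mem_univ i)⟩

variable {P}

lemma liftParts_apply_of_mem (η : P.parts → β) {B : Finset α} (hB : B ∈ P.parts) {i : α}
    (hi : i ∈ B) : P.liftParts η i = η ⟨B, hB⟩ :=
  congrArg η (Subtype.ext (P.part_eq_of_mem hB hi))

lemma liftParts_eq_of_mem (η : P.parts → β) {B : Finset α} (hB : B ∈ P.parts) {i j : α}
    (hi : i ∈ B) (hj : j ∈ B) : P.liftParts η i = P.liftParts η j := by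
  rw [liftParts_apply_of_mem η hB hi, liftParts_apply_of_mem η hB hj]

variable (P) in
lemma liftParts_injective : Function.Injective (P.liftParts (β := β)) := by
  intro η η' h
  funext B
  obtain ⟨i, hi⟩ := P.nonempty_of_mem_parts B.2
  simpa only [liftParts_apply_of_mem _ B.2 hi] using congrFun h i

lemma exists_liftParts_eq {ρ : α → β} (h : ∀ B ∈ P.parts, ∀ i ∈ B, ∀ j ∈ B, ρ i = ρ j) :
    ∃ η, P.liftParts η = ρ := by
  refine ⟨fun B => ρ (P.nonempty_of_mem_parts B.2).choose, funext fun i => ?_⟩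
  have hi : P.part i ∈ P.parts := P.part_mem.2 (mem_univ i)
  exact h _ hi _ (P.nonempty_of_mem_parts hi).choose_spec i (P.mem_part (mem_univ i))

lemma prod_liftParts {M : Type*} [CommMonoid M] (T : Finset α) (f : β → M) (η : P.parts → β) :
    ∏ i ∈ T, f (P.liftParts η i) = ∏ B : P.parts, f (η B) ^ #(B.1 ∩ T) := by
  refine (prod_fiberwise_of_maps_to' (t := univ)
    (g := fun i => (⟨P.part i, P.part_mem.2 (mem_univ i)⟩ : P.parts)) (fun i _ => mem_univ _)
    (fun B => f (η B))).symm.trans (prod_congr rfl fun B _ => ?_)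
  rw [prod_const]
  congr 2
  ext i
  simp only [mem_filter, mem_inter, Subtype.ext_iff, P.part_eq_iff_mem B.2, and_comm]

def blockAndSingletons (S : Finset α) : Finpartition (univ : Finset α) :=
  ofErase (insert S ((univ \ S).image singleton))
    (by
      rw [supIndep_iff_pairwiseDisjoint]
      simp only [coe_insert, coe_image, coe_sdiff, coe_univ]
      refine (Set.PairwiseDisjoint.insert ?_ ?_)
      · rintro _ ⟨i, -, rfl⟩ _ ⟨j, -, rfl⟩ hij
        exact disjoint_singleton.2 fun h => hij (congrArg _ h)
      · rintro _ ⟨j, hj, rfl⟩ -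
        exact disjoint_singleton_right.2 (by simpa using hj))
    (by ext; simp)

lemma mem_blockAndSingletons_parts {S B : Finset α} :
    B ∈ (blockAndSingletons S).parts ↔ B ≠ ∅ ∧ (B = S ∨ ∃ j ∉ S, B = {j}) := by
  simp [blockAndSingletons, ofErase, eq_comm]

end Finpartition

noncomputable def centeredMonomial {α : Type*} (p : ℝ) (T : Finset α) (ρ : α → Bool) : ℝ :=
  ∏ i ∈ T, ((if ρ i then 1 else 0) - p)

noncomputable def bernoulliCentralMoment (p : ℝ) (k : ℕ) : ℝ :=
  p * (1 - p) ^ k + (1 - p) * (-p) ^ k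

lemma bernoulliCentralMoment_zero (p : ℝ) : bernoulliCentralMoment p 0 = 1 := by
  simp [bernoulliCentralMoment]

lemma bernoulliCentralMoment_one (p : ℝ) : bernoulliCentralMoment p 1 = 0 := by
  simp [bernoulliCentralMoment]; ring

lemma bernoulliCentralMoment_ne_zero {p : ℝ} (hp : p ∈ Set.Ioo (0 : ℝ) 1) (hp' : p ≠ 1 / 2)
    {k : ℕ} (hk : k ≠ 1) : bernoulliCentralMoment p k ≠ 0 := by
  obtain ⟨hp0, hp1⟩ := hp
  obtain _ | m := k
  · simp [bernoulliCentralMoment]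
  have hm : m ≠ 0 := by rintro rfl; exact hk rfl
  rcases Nat.even_or_odd (m + 1) with h_even | h_odd
  · rw [bernoulliCentralMoment, h_even.neg_pow]
    have : 0 < 1 - p := by linarith
    positivity
  · have h_ne : (1 - p) ^ m - p ^ m ≠ 0 :=
      sub_ne_zero.2 fun h => hp' (by linarith [(pow_left_inj₀ (by linarith) hp0.le hm).1 h])
    have : bernoulliCentralMoment p (m + 1) = p * (1 - p) * ((1 - p) ^ m - p ^ m) := by
      rw [bernoulliCentralMoment, h_odd.neg_pow]; ring
    rw [this]
    exact mul_ne_zero (mul_ne_zero hp0.ne' (by linarith)) h_ne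

section colorMatrix

variable {n : ℕ} {p : ℝ}

lemma colorMatrix_liftParts (σ : Finpartition (univ : Finset (Fin n))) (η : σ.parts → Bool) :
    colorMatrix n p (σ.liftParts η) σ = ∏ B : σ.parts, if η B then p else 1 - p := by
  have h_const : ∀ B ∈ σ.parts, ∀ i ∈ B, ∀ j ∈ B, σ.liftParts η i = σ.liftParts η j :=
    fun B hB i hi j hj => Finpartition.liftParts_eq_of_mem η hB hi hj
  have h_true : ∀ B : σ.parts, (∀ i ∈ B.1, σ.liftParts η i = true) ↔ η B = true := by
    intro B
    obtain ⟨i, hi⟩ := σ.nonempty_of_mem_parts B.2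
    refine ⟨fun h => ?_, fun h j hj => ?_⟩
    · simpa only [Finpartition.liftParts_apply_of_mem η B.2 hi] using h i hi
    · rwa [Finpartition.liftParts_apply_of_mem η B.2 hj]
  have h_card := card_filter_add_card_filter_not (s := σ.parts)
    (p := fun B => ∀ i ∈ B, σ.liftParts η i = true)
  rw [colorMatrix, if_pos h_const, ← Nat.eq_sub_of_add_eq' h_card, ← prod_const, ← prod_const,
    ← prod_ite, ← prod_coe_sort σ.parts]
  exact prod_congr rfl fun B _ => if_congr (h_true B) rfl rfl

theorem vecMul_centeredMonomial_colorMatrix (T : Finset (Fin n))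
    (σ : Finpartition (univ : Finset (Fin n))) :
    Matrix.vecMul (centeredMonomial p T) (colorMatrix n p) σ =
      ∏ B ∈ σ.parts, bernoulliCentralMoment p #(B ∩ T) := by
  calc Matrix.vecMul (centeredMonomial p T) (colorMatrix n p) σ
      = ∑ η : σ.parts → Bool,
          centeredMonomial p T (σ.liftParts η) * colorMatrix n p (σ.liftParts η) σ := by
        refine (Fintype.sum_of_injective _ σ.liftParts_injective _ _ (fun ρ hρ => ?_)
          fun _ => rfl).symm
        have h_zero : colorMatrix n p ρ σ = 0 :=
          if_neg fun h => hρ (σ.exists_liftParts_eq h)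
        exact mul_eq_zero_of_right _ h_zero
    _ = ∑ η : σ.parts → Bool, ∏ B : σ.parts,
          ((if η B then 1 else 0) - p) ^ #(B.1 ∩ T) * (if η B then p else 1 - p) := by
        refine Fintype.sum_congr _ _ fun η => ?_
        have h_mono := σ.prod_liftParts T (fun b => (if b then (1 : ℝ) else 0) - p) η
        rw [centeredMonomial, h_mono, colorMatrix_liftParts, prod_mul_distrib]
    _ = ∏ B : σ.parts, ∑ b : Bool,
          ((if b then 1 else 0) - p) ^ #(B.1 ∩ T) * (if b then p else 1 - p) :=
        (Fintype.prod_sum fun (B : σ.parts) (b : Bool) =>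
          ((if b then 1 else 0) - p) ^ #(B.1 ∩ T) * (if b then p else 1 - p)).symm
    _ = ∏ B ∈ σ.parts, bernoulliCentralMoment p #(B ∩ T) := by
        rw [← prod_coe_sort σ.parts]
        refine prod_congr rfl fun B _ => ?_
        simp only [Fintype.sum_bool, bernoulliCentralMoment, if_true, Bool.false_eq_true,
          if_false]
        ring

end colorMatrix

section blockAndSingletons

open Finpartition

variable {n : ℕ} {p : ℝ}

lemma prod_bernoulliCentralMoment_blockAndSingletons_of_not_subset {S T : Finset (Fin n)}
    (h : ¬T ⊆ S) :
    ∏ B ∈ (blockAndSingletons S).parts, bernoulliCentralMoment p #(B ∩ T) = 0 := by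
  obtain ⟨j, hjT, hjS⟩ := not_subset.1 h
  have hj : {j} ∈ (blockAndSingletons S).parts :=
    mem_blockAndSingletons_parts.2 ⟨singleton_ne_empty j, .inr ⟨j, hjS, rfl⟩⟩
  refine prod_eq_zero hj ?_
  rw [singleton_inter_of_mem hjT, card_singleton, bernoulliCentralMoment_one]

lemma prod_bernoulliCentralMoment_blockAndSingletons_self_ne_zero (hp : p ∈ Set.Ioo (0 : ℝ) 1)
    (hp' : p ≠ 1 / 2) {S : Finset (Fin n)} (hS : #S ≠ 1) :
    ∏ B ∈ (blockAndSingletons S).parts, bernoulliCentralMoment p #(B ∩ S) ≠ 0 := by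
  refine prod_ne_zero_iff.2 fun B hB => ?_
  obtain ⟨-, rfl | ⟨j, hj, rfl⟩⟩ := mem_blockAndSingletons_parts.1 hB
  · rw [inter_self]
    exact bernoulliCentralMoment_ne_zero hp hp' hS
  · rw [singleton_inter_of_notMem hj, card_empty, bernoulliCentralMoment_zero]
    exact one_ne_zero

end blockAndSingletons

theorem finrank_range_colorMap_le (n : ℕ) (p : ℝ) :
    Module.finrank ℝ (LinearMap.range (colorMap n p)) ≤ 2 ^ n - n := by
  classical
  let N : Matrix (Fin n) (Fin n → Bool) ℝ := Matrix.of fun i => centeredMonomial p {i}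
  let X : Matrix (Fin n → Bool) (Fin n) ℝ := Matrix.of fun ρ j =>
    (Pi.single (fun k => decide (k = j)) 1 - Pi.single (fun _ => false) 1 : (Fin n → Bool) → ℝ) ρ
  have hNM : N * colorMatrix n p = 0 := by
    ext i σ
    change Matrix.vecMul (centeredMonomial p {i}) (colorMatrix n p) σ = 0
    rw [vecMul_centeredMonomial_colorMatrix]
    refine prod_eq_zero (σ.part_mem.2 (mem_univ i)) ?_
    rw [inter_singleton_of_mem (σ.mem_part (mem_univ i)), card_singleton,
      bernoulliCentralMoment_one]
  have hNX : N * X = 1 := by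
    ext i j
    simp [N, X, Matrix.mul_apply, mul_sub, sum_sub_distrib, Pi.single_apply, centeredMonomial,
      Matrix.one_apply]
  have h_range : LinearMap.range (colorMap n p) ≤ LinearMap.ker N.mulVecLin := by
    rintro _ ⟨x, rfl⟩
    simp [colorMap, Matrix.mulVec_mulVec, hNM]
  have h_surj : LinearMap.range N.mulVecLin = ⊤ :=
    LinearMap.range_eq_top.2 fun y => ⟨X *ᵥ y, by simp [Matrix.mulVec_mulVec, hNX]⟩
  have h_ker := LinearMap.finrank_range_add_finrank_ker N.mulVecLin
  rw [h_surj, finrank_top, Module.finrank_fin_fun, Module.finrank_fintype_fun_eq_card,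
    Fintype.card_fun, Fintype.card_bool, Fintype.card_fin] at h_ker
  have := Submodule.finrank_mono h_range
  omega

theorem le_finrank_range_colorMap {n : ℕ} {p : ℝ} (hp : p ∈ Set.Ioo (0 : ℝ) 1)
    (hp' : p ≠ 1 / 2) : 2 ^ n - n ≤ Module.finrank ℝ (LinearMap.range (colorMap n p)) := by
  classical
  let v : {S : Finset (Fin n) // #S ≠ 1} → (Fin n → Bool) → ℝ :=
    fun S => (colorMatrix n p).col (Finpartition.blockAndSingletons S.1)
  have h_pair : ∀ T S : {S : Finset (Fin n) // #S ≠ 1},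
      dotProductBilin ℝ ℝ (centeredMonomial p T.1) (v S) =
        ∏ B ∈ (Finpartition.blockAndSingletons S.1).parts, bernoulliCentralMoment p #(B ∩ T.1) :=
    fun T S => vecMul_centeredMonomial_colorMatrix _ _
  have h_li : LinearIndependent ℝ v := by
    refine linearIndependent_of_pairing_triangular v
      (fun T => dotProductBilin ℝ ℝ (centeredMonomial p T.1)) (fun T S h => ?_) (fun S => ?_)
    · by_contra hTS
      rw [h_pair] at h
      exact h (prod_bernoulliCentralMoment_blockAndSingletons_of_not_subset hTS)
    · rw [h_pair]
      exact prod_bernoulliCentralMoment_blockAndSingletons_self_ne_zero hp hp' S.2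
  have h_span : Submodule.span ℝ (Set.range v) ≤ LinearMap.range (colorMap n p) :=
    Submodule.span_le.2 <| Set.range_subset_iff.2 fun S =>
      ⟨Pi.single _ 1, (colorMatrix n p).mulVec_single_one _⟩
  have h_card : Fintype.card {S : Finset (Fin n) // #S ≠ 1} = 2 ^ n - n := by
    simp [Fintype.card_subtype_compl]
  calc 2 ^ n - n = Module.finrank ℝ (Submodule.span ℝ (Set.range v)) := by
        rw [finrank_span_eq_card h_li, h_card]
    _ ≤ _ := Submodule.finrank_mono h_span

theorem rank_colorMap_general (n : ℕ) (p : ℝ) (hp : p ∈ Set.Ioo (0:ℝ) 1)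
    (hp' : p ≠ 1/2) :
    Module.finrank ℝ (LinearMap.range (colorMap n p)) = 2 ^ n - n ∧
    Module.finrank ℝ (LinearMap.ker (colorMap n p)) =
      Fintype.card (Finpartition (univ : Finset (Fin n))) - (2 ^ n - n) := by
  have h_rank : Module.finrank ℝ (LinearMap.range (colorMap n p)) = 2 ^ n - n :=
    (finrank_range_colorMap_le n p).antisymm (le_finrank_range_colorMap hp hp')
  refine ⟨h_rank, ?_⟩
  have h_nullity := LinearMap.finrank_range_add_finrank_ker (colorMap n p)
  rw [h_rank, Module.finrank_fintype_fun_eq_card] at h_nullity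
  omega

/-- for `n ≥ 1` and `p ∈ (0,1)` with `p ≠ 1/2`, `A_{n,p}` has rank `2^n - n`
and nullity `|B_n| - (2^n - n)`. -/
theorem rank_colorMap (n : ℕ) (hn : 1 ≤ n) (p : ℝ) (hp : p ∈ Set.Ioo (0:ℝ) 1)
    (hp' : p ≠ 1/2) :
    Module.finrank ℝ (LinearMap.range (colorMap n p)) = 2 ^ n - n ∧
    Module.finrank ℝ (LinearMap.ker (colorMap n p)) =
      Fintype.card (Finpartition (univ : Finset (Fin n))) - (2 ^ n - n) :=
  rank_colorMap_general n p hp hp'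
end

section
/- For every n ≥ 1 and every p ∈ (0,1) with p ≠ 1/2, the range of A_{n,p} is exactly the subspace {ν ∈ ℝ^{{0,1}^n} : for every i ∈ [n], p · Σ_{ρ : ρ(i)=0} ν(ρ) = (1−p) · Σ_{ρ : ρ(i)=1} ν(ρ)}. In particular, every probability vector ν on {0,1}^n all of whose one-dimensional marginals equal p δ_1 + (1−p) δ_0 lies in the range of A_{n,p}. -/
open Finset

/-!
Change coordinates by the matrix `G` with rows `ρ ↦ ∏_{i ∈ T} (ρ_i - p)`, `T ⊆ [n]`, which is
invertible. A column of `A_{n,p}` is the law of a colouring that is constant on the blocks of `σ`,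
the blocks being coloured independently with Bernoulli(`p`) colours, so `G` sends it to
`T ↦ ∏_B m_{|B ∩ T|}`, where `m_k` is the `k`-th central moment of Bernoulli(`p`). As `m_1 = 0`,
these vectors vanish at the singletons `T = {i}`, which is the marginal condition. Conversely,
`m_k ≠ 0` for `k ≠ 1` when `p ≠ 1/2`, and the partition `collapse S`, whose only block that is not
a singleton is `S`, is sent to `T ↦ [T ⊆ S] m_{|T|}`; by induction on `S`, the image under `G`
contains every vector vanishing at the singletons.
-/

namespace DivideAndColor

open scoped Matrix

section Bernoulli

def bernoulliWeight (p : ℝ) (b : Bool) : ℝ := if b then p else 1 - p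

def centered (p : ℝ) (b : Bool) : ℝ := (if b then 1 else 0) - p

def bernoulliCentralMoment (p : ℝ) (k : ℕ) : ℝ := ∑ b : Bool, bernoulliWeight p b * centered p b ^ k

lemma bernoulliCentralMoment_eq (p : ℝ) (k : ℕ) :
    bernoulliCentralMoment p k = p * (1 - p) ^ k + (1 - p) * (-p) ^ k := by
  simp [bernoulliCentralMoment, bernoulliWeight, centered]

lemma bernoulliCentralMoment_zero (p : ℝ) : bernoulliCentralMoment p 0 = 1 := by
  simp [bernoulliCentralMoment_eq]

lemma bernoulliCentralMoment_one (p : ℝ) : bernoulliCentralMoment p 1 = 0 := by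
  rw [bernoulliCentralMoment_eq]
  ring

lemma bernoulliCentralMoment_ne_zero {p : ℝ} (hp : p ∈ Set.Ioo 0 1) (hp' : p ≠ 1 / 2) {k : ℕ}
    (hk : k ≠ 1) : bernoulliCentralMoment p k ≠ 0 := by
  obtain ⟨hp0, hp1⟩ := hp
  have hq : 0 < 1 - p := by linarith
  rw [bernoulliCentralMoment_eq]
  obtain ⟨j, rfl | rfl⟩ := Nat.even_or_odd' k
  · rw [(even_two_mul j).neg_pow]
    positivity
  · have hpow : (1 - p) ^ (2 * j) ≠ p ^ (2 * j) := fun h =>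
      hp' (by linarith [(pow_left_inj₀ hq.le hp0.le (by omega)).1 h])
    rw [(odd_two_mul_add_one j).neg_pow, show p * (1 - p) ^ (2 * j + 1) + (1 - p) * -p ^ (2 * j + 1)
      = p * (1 - p) * ((1 - p) ^ (2 * j) - p ^ (2 * j)) by ring]
    exact mul_ne_zero (by positivity) (sub_ne_zero.2 hpow)

end Bernoulli

section CenteredMonomial

variable {ι : Type*} [Fintype ι] [DecidableEq ι]

variable (ι) in
def centeredMonomial (p : ℝ) : Matrix (Finset ι) (ι → Bool) ℝ :=
  fun T ρ => ∏ i ∈ T, centered p (ρ i)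

lemma centeredMonomial_mulVec_injective (p : ℝ) :
    Function.Injective (centeredMonomial ι p).mulVec := by
  -- `H` is the tensor power of the inverse `[[1 - p, -1], [p, 1]]` of `[[1, 1], [-p, 1 - p]]`.
  let H : Matrix (ι → Bool) (Finset ι) ℝ := fun ρ T =>
    (∏ i ∈ T, if ρ i then 1 else -1) * ∏ i ∈ univ \ T, bernoulliWeight p (ρ i)
  have hcoord : ∀ b b' : Bool,
      (if b then 1 else -1) * centered p b' + bernoulliWeight p b = if b = b' then 1 else 0 := by
    intro b b'
    cases b <;> cases b' <;> simp [centered, bernoulliWeight]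
  have hHG : H * centeredMonomial ι p = 1 := by
    ext ρ ρ'
    calc (H * centeredMonomial ι p) ρ ρ'
        = ∑ T ∈ univ.powerset, (∏ i ∈ T, (if ρ i then 1 else -1) * centered p (ρ' i)) *
            ∏ i ∈ univ \ T, bernoulliWeight p (ρ i) := by
          rw [powerset_univ, Matrix.mul_apply]
          refine sum_congr rfl fun T _ => ?_
          simp only [H, centeredMonomial, prod_mul_distrib]
          ring
      _ = ∏ i, if ρ i = ρ' i then 1 else 0 := by
          rw [← prod_add]
          exact prod_congr rfl fun i _ => hcoord _ _
      _ = (1 : Matrix (ι → Bool) (ι → Bool) ℝ) ρ ρ' := by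
          simp [prod_boole, Matrix.one_apply, funext_iff]
  refine Function.LeftInverse.injective (g := H.mulVec) fun ν => ?_
  rw [Matrix.mulVec_mulVec, hHG, Matrix.one_mulVec]

lemma centeredMonomial_mulVec_singleton (p : ℝ) (ν : (ι → Bool) → ℝ) (i : ι) :
    (centeredMonomial ι p *ᵥ ν) {i}
      = (1 - p) * ∑ ρ with ρ i = true, ν ρ - p * ∑ ρ with ρ i = false, ν ρ := by
  have hcoord : ∀ ρ : ι → Bool,
      centered p (ρ i) * ν ρ = if ρ i = true then (1 - p) * ν ρ else -(p * ν ρ) := by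
    intro ρ
    cases ρ i <;> simp [centered]
  simp only [Matrix.mulVec, dotProduct, centeredMonomial, prod_singleton, hcoord, sum_ite,
    Bool.not_eq_true, mul_sum, sum_neg_distrib, sub_eq_add_neg]

end CenteredMonomial

section Block

variable {ι : Type*} [Fintype ι] [DecidableEq ι] (σ : Finpartition (univ : Finset ι))

def block (i : ι) : σ.parts := ⟨σ.part i, σ.part_mem.2 (mem_univ i)⟩

variable {σ} in
lemma block_eq_iff {i : ι} {B : σ.parts} : block σ i = B ↔ i ∈ B.1 := by
  rw [block, Subtype.ext_iff, σ.part_eq_iff_mem B.2]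

lemma comp_block_injective : Function.Injective fun χ : σ.parts → Bool => χ ∘ block σ := by
  intro χ χ' h
  funext B
  obtain ⟨i, hi⟩ := σ.nonempty_of_mem_parts B.2
  have hiB : block σ i = B := block_eq_iff.2 hi
  rw [← hiB]
  exact congrFun h i

lemma mem_range_comp_block {ρ : ι → Bool} (h : ∀ B ∈ σ.parts, ∀ i ∈ B, ∀ j ∈ B, ρ i = ρ j) :
    ρ ∈ Set.range fun χ : σ.parts → Bool => χ ∘ block σ := by
  refine ⟨fun B => ρ (σ.nonempty_of_mem_parts B.2).choose, funext fun i => ?_⟩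
  have hB := (block σ i).2
  exact h _ hB _ (σ.nonempty_of_mem_parts hB).choose_spec i (σ.mem_part_self.2 (mem_univ i))

lemma prod_comp_block {M : Type*} [CommMonoid M] (f : Bool → M) (χ : σ.parts → Bool)
    (T : Finset ι) : ∏ i ∈ T, f (χ (block σ i)) = ∏ B : σ.parts, f (χ B) ^ #(T ∩ B.1) := by
  refine (prod_fiberwise' T (block σ) (fun B => f (χ B))).symm.trans
    (prod_congr rfl fun B _ => ?_)
  rw [prod_const, ← filter_mem_eq_inter]
  simp only [block_eq_iff]

end Block

lemma prod_ite_eq_pow_mul_pow {α M : Type*} [CommMonoid M] (s : Finset α) (P : α → Prop)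
    [DecidablePred P] (a b : M) :
    ∏ x ∈ s, (if P x then a else b) = a ^ #(s.filter P) * b ^ (#s - #(s.filter P)) := by
  rw [prod_ite, prod_const, prod_const, ← card_filter_add_card_filter_not P (s := s),
    Nat.add_sub_cancel_left]

section ColorMatrix

variable {n : ℕ} (p : ℝ) (σ : Finpartition (univ : Finset (Fin n)))

lemma colorMatrix_comp_block (χ : σ.parts → Bool) :
    colorMatrix n p (χ ∘ block σ) σ = ∏ B : σ.parts, bernoulliWeight p (χ B) := by
  have hblock : ∀ B : σ.parts, ∀ i ∈ B.1, (χ ∘ block σ) i = χ B :=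
    fun B i hi => congrArg χ (block_eq_iff.2 hi)
  have hcompat : ∀ B ∈ σ.parts, ∀ i ∈ B, ∀ j ∈ B, (χ ∘ block σ) i = (χ ∘ block σ) j :=
    fun B hB i hi j hj => (hblock ⟨B, hB⟩ i hi).trans (hblock ⟨B, hB⟩ j hj).symm
  have hcolor : ∀ B : σ.parts, (∀ i ∈ B.1, (χ ∘ block σ) i = true) ↔ χ B = true := by
    intro B
    obtain ⟨j, hj⟩ := σ.nonempty_of_mem_parts B.2
    exact ⟨fun h => hblock B j hj ▸ h j hj, fun h i hi => (hblock B i hi).trans h⟩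
  rw [colorMatrix, if_pos hcompat, ← prod_ite_eq_pow_mul_pow, ← prod_coe_sort]
  exact prod_congr rfl fun B _ => by simp only [hcolor B, bernoulliWeight]

lemma sum_colorMatrix_mul (F : (Fin n → Bool) → ℝ) :
    ∑ ρ, colorMatrix n p ρ σ * F ρ
      = ∑ χ : σ.parts → Bool, (∏ B, bernoulliWeight p (χ B)) * F (χ ∘ block σ) := by
  refine (Fintype.sum_of_injective _ (comp_block_injective σ) _ _ (fun ρ hρ => ?_)
    fun χ => by rw [colorMatrix_comp_block]).symm
  rw [colorMatrix, if_neg fun h => hρ (mem_range_comp_block σ h), zero_mul]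

lemma centeredMonomial_mul_colorMatrix (T : Finset (Fin n)) :
    (centeredMonomial (Fin n) p * colorMatrix n p) T σ
      = ∏ B ∈ σ.parts, bernoulliCentralMoment p #(T ∩ B) := by
  calc (centeredMonomial (Fin n) p * colorMatrix n p) T σ
      = ∑ χ : σ.parts → Bool, ∏ B, bernoulliWeight p (χ B) * centered p (χ B) ^ #(T ∩ B.1) := by
        simp_rw [Matrix.mul_apply, mul_comm (centeredMonomial (Fin n) p T _)]
        rw [sum_colorMatrix_mul]
        refine sum_congr rfl fun χ _ => ?_
        rw [prod_mul_distrib, ← prod_comp_block σ (centered p) χ T]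
        rfl
    _ = ∏ B : σ.parts, ∑ b, bernoulliWeight p b * centered p b ^ #(T ∩ B.1) := by
        rw [Fintype.prod_sum]
    _ = ∏ B ∈ σ.parts, bernoulliCentralMoment p #(T ∩ B) :=
        prod_coe_sort σ.parts fun B => bernoulliCentralMoment p #(T ∩ B)

end ColorMatrix

section Collapse

variable {ι : Type*} [Fintype ι] [DecidableEq ι]

instance {α β : Type*} [DecidableEq β] (f : α → β) : DecidableRel (Setoid.ker f) :=
  fun _ _ => decidable_of_iff _ Setoid.ker_def.symm

def collapse (S : Finset ι) : Finpartition (univ : Finset ι) :=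
  Finpartition.ofSetoid (Setoid.ker fun i => if i ∈ S then none else some i)

lemma part_collapse (S : Finset ι) (a : ι) :
    (collapse S).part a = if a ∈ S then S else {a} := by
  ext b
  rw [collapse, Finpartition.mem_part_ofSetoid_iff_rel, Setoid.ker_def]
  by_cases ha : a ∈ S <;> by_cases hb : b ∈ S <;> grind

lemma singleton_mem_parts_collapse {S : Finset ι} {a : ι} (ha : a ∉ S) :
    {a} ∈ (collapse S).parts := by
  simpa [part_collapse, ha] using (collapse S).part_mem.2 (mem_univ a)

end Collapse

section Range

variable {n : ℕ} {p : ℝ}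

lemma centeredMonomial_mul_colorMatrix_collapse (S T : Finset (Fin n)) :
    (centeredMonomial (Fin n) p * colorMatrix n p) T (collapse S)
      = if T ⊆ S then bernoulliCentralMoment p #T else 0 := by
  rw [centeredMonomial_mul_colorMatrix]
  split_ifs with hTS
  · refine (prod_eq_single S (fun B hB hBS => ?_) fun hS => ?_).trans (by rw [inter_eq_left.2 hTS])
    · obtain ⟨a, ha⟩ := (collapse S).nonempty_of_mem_parts hB
      have hpart := (collapse S).part_eq_of_mem hB ha
      rw [part_collapse] at hpart
      split_ifs at hpart with haS
      · exact absurd hpart.symm hBS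
      · rw [← hpart, inter_singleton_of_notMem fun haT => haS (hTS haT), card_empty,
          bernoulliCentralMoment_zero]
    · obtain rfl : S = ∅ := by
        by_contra hne
        obtain ⟨a, ha⟩ := nonempty_iff_ne_empty.2 hne
        exact hS (by simpa [part_collapse, ha] using (collapse S).part_mem.2 (mem_univ a))
      rw [inter_empty, card_empty, bernoulliCentralMoment_zero]
  · obtain ⟨a, haT, haS⟩ := not_subset.1 hTS
    refine prod_eq_zero (singleton_mem_parts_collapse haS) ?_
    rw [inter_singleton_of_mem haT, card_singleton, bernoulliCentralMoment_one]

lemma single_mem_range_centeredMonomial_mul_colorMatrix (hp : p ∈ Set.Ioo 0 1) (hp' : p ≠ 1 / 2)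
    (S : Finset (Fin n)) (c : ℝ) (hc : #S = 1 → c = 0) :
    Pi.single S c ∈ LinearMap.range (centeredMonomial (Fin n) p * colorMatrix n p).mulVecLin := by
  induction S using Finset.strongInduction generalizing c with
  | H S ih =>
  by_cases hS : #S = 1
  · rw [hc hS, Pi.single_zero]
    exact zero_mem _
  have hcol : (centeredMonomial (Fin n) p * colorMatrix n p).col (collapse S)
      = Pi.single S (bernoulliCentralMoment p #S)
        + ∑ T ∈ S.powerset.erase S, Pi.single T (bernoulliCentralMoment p #T) := by
    rw [add_sum_erase _ (fun T => Pi.single T (bernoulliCentralMoment p #T)) (mem_powerset_self S)]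
    funext T
    simp only [Matrix.col_apply, centeredMonomial_mul_colorMatrix_collapse, Finset.sum_apply,
      sum_pi_single, mem_powerset]
  have hcol_mem : (centeredMonomial (Fin n) p * colorMatrix n p).col (collapse S)
      ∈ LinearMap.range (centeredMonomial (Fin n) p * colorMatrix n p).mulVecLin :=
    ⟨Pi.single (collapse S) 1, by rw [Matrix.mulVecLin_apply, Matrix.mulVec_single_one]⟩
  have hsmaller : ∑ T ∈ S.powerset.erase S, Pi.single T (bernoulliCentralMoment p #T)
      ∈ LinearMap.range (centeredMonomial (Fin n) p * colorMatrix n p).mulVecLin := by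
    refine sum_mem fun T hT => ih T ?_ _ fun hT1 => by rw [hT1, bernoulliCentralMoment_one]
    obtain ⟨hTS, hT⟩ := mem_erase.1 hT
    exact ssubset_of_subset_of_ne (mem_powerset.1 hT) hTS
  have hS_mem := sub_mem hcol_mem hsmaller
  rw [hcol, add_sub_cancel_right] at hS_mem
  have hmoment := bernoulliCentralMoment_ne_zero hp hp' hS
  rw [show Pi.single S c = (c / bernoulliCentralMoment p #S) • Pi.single S
    (bernoulliCentralMoment p #S) by rw [← Pi.single_smul', smul_eq_mul, div_mul_cancel₀ _ hmoment]]
  exact Submodule.smul_mem _ _ hS_mem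

lemma centeredMonomial_mul_colorMatrix_singleton (i : Fin n)
    (σ : Finpartition (univ : Finset (Fin n))) :
    (centeredMonomial (Fin n) p * colorMatrix n p) {i} σ = 0 := by
  rw [centeredMonomial_mul_colorMatrix]
  refine prod_eq_zero (σ.part_mem.2 (mem_univ i)) ?_
  rw [singleton_inter_of_mem (σ.mem_part_self.2 (mem_univ i)), card_singleton,
    bernoulliCentralMoment_one]

lemma mem_range_centeredMonomial_mul_colorMatrix_iff (hp : p ∈ Set.Ioo 0 1) (hp' : p ≠ 1 / 2)
    {f : Finset (Fin n) → ℝ} :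
    f ∈ LinearMap.range (centeredMonomial (Fin n) p * colorMatrix n p).mulVecLin
      ↔ ∀ i, f {i} = 0 := by
  constructor
  · rintro ⟨μ, rfl⟩ i
    simp only [Matrix.mulVecLin_apply, Matrix.mulVec, dotProduct,
      centeredMonomial_mul_colorMatrix_singleton, zero_mul, sum_const_zero]
  · intro hf
    rw [← univ_sum_single f]
    refine sum_mem fun T _ =>
      single_mem_range_centeredMonomial_mul_colorMatrix hp hp' T (f T) fun hT => ?_
    obtain ⟨i, rfl⟩ := card_eq_one.1 hT
    exact hf i

lemma mem_range_colorMap_iff (hp : p ∈ Set.Ioo 0 1) (hp' : p ≠ 1 / 2)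
    {ν : (Fin n → Bool) → ℝ} :
    ν ∈ LinearMap.range (colorMap n p) ↔ ∀ i, (centeredMonomial (Fin n) p *ᵥ ν) {i} = 0 := by
  rw [← mem_range_centeredMonomial_mul_colorMatrix_iff hp hp', Matrix.mulVecLin_mul,
    LinearMap.range_comp, ← Submodule.comap_map_eq_of_injective
      (f := (centeredMonomial (Fin n) p).mulVecLin) (centeredMonomial_mulVec_injective p)
      (LinearMap.range (colorMap n p))]
  rfl

end Range

end DivideAndColor

theorem range_colorMap_general (n : ℕ) (p : ℝ) (hp : p ∈ Set.Ioo (0:ℝ) 1)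
    (hp' : p ≠ 1/2) :
    (LinearMap.range (colorMap n p) : Set ((Fin n → Bool) → ℝ)) =
      {ν : (Fin n → Bool) → ℝ | ∀ i : Fin n,
        p * ∑ ρ ∈ univ.filter (fun ρ : Fin n → Bool => ρ i = false), ν ρ
          = (1 - p) * ∑ ρ ∈ univ.filter (fun ρ : Fin n → Bool => ρ i = true), ν ρ} ∧
    ∀ ν : (Fin n → Bool) → ℝ, (∀ ρ, 0 ≤ ν ρ) → (∑ ρ, ν ρ = 1) →
      (∀ i : Fin n, ∑ ρ ∈ univ.filter (fun ρ : Fin n → Bool => ρ i = true), ν ρ = p) →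
      ν ∈ LinearMap.range (colorMap n p) := by
  have hrange : (LinearMap.range (colorMap n p) : Set ((Fin n → Bool) → ℝ)) =
      {ν | ∀ i : Fin n, p * ∑ ρ with ρ i = false, ν ρ = (1 - p) * ∑ ρ with ρ i = true, ν ρ} := by
    ext ν
    rw [SetLike.mem_coe, DivideAndColor.mem_range_colorMap_iff hp hp']
    simp only [DivideAndColor.centeredMonomial_mulVec_singleton, sub_eq_zero]
    exact forall_congr' fun i => eq_comm
  refine ⟨hrange, fun ν _ htotal hmarginal => ?_⟩
  rw [← SetLike.mem_coe, hrange]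
  intro i
  have hsplit := sum_filter_not_add_sum_filter univ (fun ρ : Fin n → Bool => ρ i = true) ν
  simp only [Bool.not_eq_true, htotal, hmarginal i] at hsplit ⊢
  rw [eq_sub_of_add_eq hsplit]
  ring

/-- for `p ∈ (0,1)`, `p ≠ 1/2`, the range of `A_{n,p}` is exactly the set of
`ν` with `p ⬝ Σ_{ρ(i)=0} ν(ρ) = (1-p) ⬝ Σ_{ρ(i)=1} ν(ρ)` for all `i`; in particular every
probability vector with marginals `p δ_1 + (1-p) δ_0` lies in the range. -/
theorem range_colorMap (n : ℕ) (hn : 1 ≤ n) (p : ℝ) (hp : p ∈ Set.Ioo (0:ℝ) 1)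
    (hp' : p ≠ 1/2) :
    (LinearMap.range (colorMap n p) : Set ((Fin n → Bool) → ℝ)) =
      {ν : (Fin n → Bool) → ℝ | ∀ i : Fin n,
        p * ∑ ρ ∈ univ.filter (fun ρ : Fin n → Bool => ρ i = false), ν ρ
          = (1 - p) * ∑ ρ ∈ univ.filter (fun ρ : Fin n → Bool => ρ i = true), ν ρ} ∧
    ∀ ν : (Fin n → Bool) → ℝ, (∀ ρ, 0 ≤ ν ρ) → (∑ ρ, ν ρ = 1) →
      (∀ i : Fin n, ∑ ρ ∈ univ.filter (fun ρ : Fin n → Bool => ρ i = true), ν ρ = p) →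
      ν ∈ LinearMap.range (colorMap n p) :=
  range_colorMap_general n p hp hp'
end

section
/- Let n ≥ 1 and p ∈ (0,1). For any q ∈ ℝ^{B_n} and any ν ∈ ℝ^{{0,1}^n}, one has A_{n,p} q = ν if and only if for every S ⊆ [n], Σ_{σ ∈ B_n} p^{‖σ_S‖} q_σ = ν(1^S). -/
open Finset

/-- `‖σ_S‖`: the number of blocks of the restriction of `σ` to `S`, i.e. the number of
blocks of `σ` meeting `S`. -/
def numBlocksOn {n : ℕ} (σ : Finpartition (univ : Finset (Fin n))) (S : Finset (Fin n)) : ℕ :=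
  (σ.parts.filter fun B => (B ∩ S).Nonempty).card

/-!
Summing the column `σ` of `A_{n,p}` over the colorings that equal `1` on `S` amounts to coloring
the blocks of `σ` independently: a block meeting `S` is forced to color `1` (weight `p`), any
other block is free (weight `p + (1 - p) = 1`); this gives `p ^ ‖σ_S‖`. Hence the right-hand side
says that `A_{n,p} q` and `ν` have the same sums over every up-set `{ρ' | ρ ≤ ρ'}` of the cube
`{0,1}^n`, and such sums determine a function on a finite poset by downward induction.
-/

theorem eq_zero_of_forall_sum_filter_le_eq_zero {α M : Type*} [Fintype α] [PartialOrder α]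
    [DecidableLE α] [AddCommMonoid M] {f : α → M}
    (h : ∀ a, ∑ b ∈ univ.filter (a ≤ ·), f b = 0) : f = 0 := by
  classical
  funext a
  induction a using WellFoundedGT.induction with
  | _ a ih =>
    have ha : a ∈ univ.filter (a ≤ ·) := mem_filter.2 ⟨mem_univ a, le_rfl⟩
    have hrest : ∑ b ∈ (univ.filter (a ≤ ·)).erase a, f b = 0 := by
      refine sum_eq_zero fun b hb => ih b ?_
      obtain ⟨hba, hb⟩ := mem_erase.1 hb
      exact lt_of_le_of_ne (mem_filter.1 hb).2 (Ne.symm hba)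
    simpa [← add_sum_erase _ _ ha, hrest] using h a

theorem Pi.bool_le_iff_forall_mem_filter {ι : Type*} [Fintype ι] (ρ₀ ρ : ι → Bool) :
    ρ₀ ≤ ρ ↔ ∀ i ∈ univ.filter (ρ₀ · = true), ρ i = true := by
  simp [Pi.le_def, Bool.le_iff_imp]

theorem Pi.bool_eq_of_forall_sum_filter_eq {ι G : Type*} [Fintype ι] [DecidableEq ι]
    [AddCommGroup G] {f g : (ι → Bool) → G}
    (h : ∀ S : Finset ι, ∑ ρ ∈ univ.filter (fun ρ : ι → Bool => ∀ i ∈ S, ρ i = true), f ρ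
      = ∑ ρ ∈ univ.filter (fun ρ : ι → Bool => ∀ i ∈ S, ρ i = true), g ρ) :
    f = g := by
  classical
  rw [← sub_eq_zero]
  refine eq_zero_of_forall_sum_filter_le_eq_zero fun ρ₀ => ?_
  simp_rw [Pi.bool_le_iff_forall_mem_filter ρ₀, Pi.sub_apply, sum_sub_distrib, h, sub_self]

theorem Finset.sum_Icc_pow_mul_pow_sub {ι R : Type*} [DecidableEq ι] [CommSemiring R] (a b : R)
    {s t : Finset ι} (hst : s ⊆ t) :
    ∑ u ∈ Icc s t, a ^ #u * b ^ (#t - #u) = a ^ #s * (a + b) ^ #(t \ s) := by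
  have hdisj : ∀ u ∈ (t \ s).powerset, Disjoint s u := fun u hu =>
    disjoint_of_subset_right (mem_powerset.1 hu) disjoint_sdiff
  have hinj : Set.InjOn (s ∪ ·) ↑(t \ s).powerset := fun u hu v hv huv => by
    rw [← union_sdiff_cancel_left (hdisj u hu), ← union_sdiff_cancel_left (hdisj v hv)]
    exact congrArg (· \ s) huv
  rw [Icc_eq_image_powerset hst, sum_image hinj, ← sum_pow_mul_eq_add_pow, mul_sum]
  refine sum_congr rfl fun u hu => ?_
  rw [card_union_of_disjoint (hdisj u hu), card_sdiff_of_subset hst, pow_add, mul_assoc,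
    Nat.sub_add_eq]

namespace Finpartition

variable {α : Type*} [Fintype α] [DecidableEq α] (σ : Finpartition (univ : Finset α))

def trueBlocks (ρ : α → Bool) : Finset (Finset α) :=
  σ.parts.filter fun B => ∀ i ∈ B, ρ i = true

def coloringOfBlocks (T : Finset (Finset α)) (x : α) : Bool :=
  decide (σ.part x ∈ T)

variable {σ}

theorem trueBlocks_subset (ρ : α → Bool) : σ.trueBlocks ρ ⊆ σ.parts :=
  filter_subset _ _

theorem coloringOfBlocks_eq_of_mem_block (T : Finset (Finset α)) :
    ∀ B ∈ σ.parts, ∀ i ∈ B, ∀ j ∈ B, σ.coloringOfBlocks T i = σ.coloringOfBlocks T j := by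
  intro B hB i hi j hj
  simp only [coloringOfBlocks, σ.part_eq_of_mem hB hi, σ.part_eq_of_mem hB hj]

theorem trueBlocks_coloringOfBlocks {T : Finset (Finset α)} (hT : T ⊆ σ.parts) :
    σ.trueBlocks (σ.coloringOfBlocks T) = T := by
  ext B
  simp only [trueBlocks, coloringOfBlocks, mem_filter, decide_eq_true_eq]
  constructor
  · rintro ⟨hB, hall⟩
    obtain ⟨x, hx⟩ := σ.nonempty_of_mem_parts hB
    simpa [σ.part_eq_of_mem hB hx] using hall x hx
  · intro hBT
    exact ⟨hT hBT, fun i hi => by rwa [σ.part_eq_of_mem (hT hBT) hi]⟩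

theorem coloringOfBlocks_trueBlocks {ρ : α → Bool}
    (hρ : ∀ B ∈ σ.parts, ∀ i ∈ B, ∀ j ∈ B, ρ i = ρ j) :
    σ.coloringOfBlocks (σ.trueBlocks ρ) = ρ := by
  funext x
  have hx := σ.mem_part (mem_univ x)
  have hpart := σ.part_mem.2 (mem_univ x)
  rw [coloringOfBlocks, Bool.eq_iff_iff, decide_eq_true_eq, trueBlocks, mem_filter]
  exact ⟨fun ⟨_, hall⟩ => hall x hx, fun h => ⟨hpart, fun i hi => (hρ _ hpart i hi x hx).trans h⟩⟩

theorem forall_coloringOfBlocks_eq_true_iff (T : Finset (Finset α)) (S : Finset α) :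
    (∀ i ∈ S, σ.coloringOfBlocks T i = true) ↔ σ.parts.filter (fun B => (B ∩ S).Nonempty) ⊆ T := by
  simp only [coloringOfBlocks, decide_eq_true_eq, subset_iff, mem_filter]
  constructor
  · rintro h B ⟨hB, x, hx⟩
    rw [mem_inter] at hx
    simpa [σ.part_eq_of_mem hB hx.1] using h x hx.2
  · intro h i hi
    exact h ⟨σ.part_mem.2 (mem_univ i), i, mem_inter.2 ⟨σ.mem_part (mem_univ i), hi⟩⟩

end Finpartition

open Finpartition

theorem colorMatrix_coloringOfBlocks {n : ℕ} (p : ℝ) {σ : Finpartition (univ : Finset (Fin n))}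
    {T : Finset (Finset (Fin n))} (hT : T ⊆ σ.parts) :
    colorMatrix n p (σ.coloringOfBlocks T) σ = p ^ #T * (1 - p) ^ (#σ.parts - #T) := by
  rw [colorMatrix, if_pos (coloringOfBlocks_eq_of_mem_block T)]
  -- `colorMatrix` decides `∀ i ∈ B, _` by `Nat.decidableForallFin`, `trueBlocks` via `Fintype`
  convert congrArg (fun T' => p ^ #T' * (1 - p) ^ (#σ.parts - #T'))
    (trueBlocks_coloringOfBlocks hT) using 5 <;> unfold trueBlocks <;> congr

theorem sum_colorMatrix_filter_forall_eq_true {n : ℕ} (p : ℝ)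
    (σ : Finpartition (univ : Finset (Fin n))) (S : Finset (Fin n)) :
    ∑ ρ ∈ univ.filter (fun ρ : Fin n → Bool => ∀ i ∈ S, ρ i = true), colorMatrix n p ρ σ
      = p ^ numBlocksOn σ S := by
  set M := σ.parts.filter fun B => (B ∩ S).Nonempty
  have hM : M ⊆ σ.parts := filter_subset _ _
  calc ∑ ρ ∈ univ.filter (fun ρ : Fin n → Bool => ∀ i ∈ S, ρ i = true), colorMatrix n p ρ σ
      = ∑ ρ ∈ (univ.filter (fun ρ : Fin n → Bool => ∀ i ∈ S, ρ i = true)).filter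
          (fun ρ => ∀ B ∈ σ.parts, ∀ i ∈ B, ∀ j ∈ B, ρ i = ρ j), colorMatrix n p ρ σ := by
        refine (sum_filter_of_ne fun ρ _ hρ => ?_).symm
        by_contra h
        exact hρ (by rw [colorMatrix, if_neg h])
    _ = ∑ T ∈ Icc M σ.parts, p ^ #T * (1 - p) ^ (#σ.parts - #T) := by
        refine sum_nbij' σ.trueBlocks σ.coloringOfBlocks ?_ ?_ ?_ ?_ ?_
        · intro ρ hρ
          obtain ⟨hS, hρ⟩ := by simpa only [mem_filter, mem_univ, true_and] using hρ
          rw [← coloringOfBlocks_trueBlocks hρ, forall_coloringOfBlocks_eq_true_iff] at hS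
          exact mem_Icc.2 ⟨hS, trueBlocks_subset ρ⟩
        · intro T hT
          simp only [mem_filter, mem_univ, true_and]
          exact ⟨(forall_coloringOfBlocks_eq_true_iff T S).2 (mem_Icc.1 hT).1,
            coloringOfBlocks_eq_of_mem_block T⟩
        · intro ρ hρ
          exact coloringOfBlocks_trueBlocks (mem_filter.1 hρ).2
        · intro T hT
          exact trueBlocks_coloringOfBlocks (mem_Icc.1 hT).2
        · intro ρ hρ
          conv_lhs => rw [← coloringOfBlocks_trueBlocks (mem_filter.1 hρ).2]
          exact colorMatrix_coloringOfBlocks p (trueBlocks_subset ρ)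
    _ = p ^ numBlocksOn σ S := by
        rw [sum_Icc_pow_mul_pow_sub _ _ hM, add_sub_cancel, one_pow, mul_one]
        rfl

theorem sum_colorMap_filter_forall_eq_true {n : ℕ} (p : ℝ)
    (q : Finpartition (univ : Finset (Fin n)) → ℝ) (S : Finset (Fin n)) :
    ∑ ρ ∈ univ.filter (fun ρ : Fin n → Bool => ∀ i ∈ S, ρ i = true), colorMap n p q ρ
      = ∑ σ : Finpartition (univ : Finset (Fin n)), p ^ numBlocksOn σ S * q σ := by
  simp only [colorMap, Matrix.mulVecLin_apply, Matrix.mulVec, dotProduct]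
  rw [sum_comm]
  simp_rw [← sum_mul, sum_colorMatrix_filter_forall_eq_true]

theorem colorMap_eq_iff_general (n : ℕ) (p : ℝ)
    (q : Finpartition (univ : Finset (Fin n)) → ℝ) (ν : (Fin n → Bool) → ℝ) :
    colorMap n p q = ν ↔
      ∀ S : Finset (Fin n),
        ∑ σ : Finpartition (univ : Finset (Fin n)), p ^ numBlocksOn σ S * q σ
          = ∑ ρ ∈ univ.filter (fun ρ : Fin n → Bool => ∀ i ∈ S, ρ i = true), ν ρ := by
  simp_rw [← sum_colorMap_filter_forall_eq_true]
  refine ⟨fun h S => h ▸ rfl, fun h => ?_⟩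
  -- `convert` reconciles the `Decidable` instances of the filters on `Fin n` and on a general `ι`
  exact Pi.bool_eq_of_forall_sum_filter_eq fun S => by convert h S using 3

/-- `A_{n,p} q = ν` iff for every `S ⊆ [n]`,
`Σ_σ p^{‖σ_S‖} q_σ = ν(1^S)`. -/
theorem colorMap_eq_iff (n : ℕ) (hn : 1 ≤ n) (p : ℝ) (hp : p ∈ Set.Ioo (0:ℝ) 1)
    (q : Finpartition (univ : Finset (Fin n)) → ℝ) (ν : (Fin n → Bool) → ℝ) :
    colorMap n p q = ν ↔
      ∀ S : Finset (Fin n),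
        ∑ σ : Finpartition (univ : Finset (Fin n)), p ^ numBlocksOn σ S * q σ
          = ∑ ρ ∈ univ.filter (fun ρ : Fin n → Bool => ∀ i ∈ S, ρ i = true), ν ρ :=
  colorMap_eq_iff_general n p q ν
end

section
/- Let n ≥ 1, let p ∈ ℝ, and let S, T ⊆ [n]. Then Σ_{S' ⊆ S} (−p)^{|S|−|S'|} p^{|S'∖T| + min(1,|S'∩T|)} equals p(1−p)^{|S|} + (−p)^{|S|}(1−p) if S ⊆ T, and equals 0 otherwise. -/
/-!
Expanding `∏_{a ∈ S} (w a - p)` over subsets gives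
`∑_{S' ⊆ S} (-p)^{|S| - |S'|} ∏_{a ∈ S'} w a`. With `w a = q` on `T` and `w a = p` off `T`, the
product over `S'` is `p^{|S' \ T|} q^{|S' ∩ T|}`, while each factor of the product over `S` is
`q - p` on `T` and `0` off `T`. Writing `p^{min 1 k} = p · 1^k + (1 - p) · 0^k` splits the sum
into the cases `q = 1` and `q = 0`.
-/

open Finset

section

variable {α R : Type*} [DecidableEq α] [CommRing R]

theorem Finset.sum_powerset_neg_pow_mul_prod (p : R) (w : α → R) (S : Finset α) :
    ∑ S' ∈ S.powerset, (-p) ^ (S.card - S'.card) * ∏ a ∈ S', w a = ∏ a ∈ S, (w a - p) := by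
  simp_rw [sub_eq_add_neg, prod_add]
  refine sum_congr rfl fun S' hS' => ?_
  rw [prod_const, card_sdiff_of_subset (mem_powerset.mp hS'), mul_comm]

theorem Finset.prod_ite_mem_eq_pow_mul_pow (p q : R) (S' T : Finset α) :
    ∏ a ∈ S', (if a ∈ T then q else p) = p ^ (S' \ T).card * q ^ (S' ∩ T).card := by
  rw [prod_ite, filter_mem_eq_inter, filter_notMem_eq_sdiff, prod_const, prod_const, mul_comm]

theorem Finset.prod_ite_mem_sub_eq (p q : R) (S T : Finset α) :
    ∏ a ∈ S, ((if a ∈ T then q else p) - p) = if S ⊆ T then (q - p) ^ S.card else 0 := by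
  split_ifs with hST
  · rw [← prod_const]
    exact prod_congr rfl fun a ha => by rw [if_pos (hST ha)]
  · obtain ⟨a, haS, haT⟩ := not_subset.mp hST
    exact prod_eq_zero haS (by rw [if_neg haT, sub_self])

theorem Finset.sum_powerset_neg_pow_mul_pow_sdiff_mul_pow_inter (p q : R) (S T : Finset α) :
    ∑ S' ∈ S.powerset, (-p) ^ (S.card - S'.card) * (p ^ (S' \ T).card * q ^ (S' ∩ T).card)
      = if S ⊆ T then (q - p) ^ S.card else 0 := by
  simp_rw [← prod_ite_mem_eq_pow_mul_pow, sum_powerset_neg_pow_mul_prod, prod_ite_mem_sub_eq]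

theorem pow_min_one (p : R) (k : ℕ) : p ^ min 1 k = p * 1 ^ k + (1 - p) * 0 ^ k := by
  rcases k with _ | k <;> simp

end

theorem powerset_sum_eval_general (n : ℕ) (p : ℝ) (S T : Finset (Fin n)) :
    ∑ S' ∈ S.powerset, (-p) ^ (S.card - S'.card) * p ^ ((S' \ T).card + min 1 (S' ∩ T).card)
      = if S ⊆ T then p * (1 - p) ^ S.card + (-p) ^ S.card * (1 - p) else 0 := by
  have hsplit : ∀ S' : Finset (Fin n),
      (-p) ^ (S.card - S'.card) * p ^ ((S' \ T).card + min 1 (S' ∩ T).card)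
        = p * ((-p) ^ (S.card - S'.card) * (p ^ (S' \ T).card * 1 ^ (S' ∩ T).card))
          + (1 - p) * ((-p) ^ (S.card - S'.card) * (p ^ (S' \ T).card * 0 ^ (S' ∩ T).card)) :=
    fun S' => by rw [pow_add, pow_min_one]; ring
  simp_rw [hsplit, sum_add_distrib, ← mul_sum, sum_powerset_neg_pow_mul_pow_sdiff_mul_pow_inter]
  split_ifs <;> ring

/-- `Σ_{S' ⊆ S} (-p)^{|S|-|S'|} p^{|S'∖T| + min(1,|S'∩T|)}` equals
`p(1-p)^{|S|} + (-p)^{|S|}(1-p)` if `S ⊆ T`, and `0` otherwise. -/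
theorem powerset_sum_eval (n : ℕ) (hn : 1 ≤ n) (p : ℝ) (S T : Finset (Fin n)) :
    ∑ S' ∈ S.powerset, (-p) ^ (S.card - S'.card) * p ^ ((S' \ T).card + min 1 (S' ∩ T).card)
      = if S ⊆ T then p * (1 - p) ^ S.card + (-p) ^ S.card * (1 - p) else 0 :=
  powerset_sum_eval_general n p S T
end

section
/- Let n ≥ 1. Let Q^Inv ⊆ ℝ^{B_n} and V^Inv ⊆ ℝ^{{0,1}^n} be the subspaces of vectors invariant under the natural action of the symmetric group S_n. Then the restriction A^Inv_{n,1/2} of A_{n,1/2} to Q^Inv has rank ⌊n/2⌋ + 1 (so its kernel has dimension P_n − ⌊n/2⌋ − 1, where P_n is the number of integer partitions of n), and its range is exactly the set of ν ∈ V^Inv whose level sums ν_k := Σ_{ρ with exactly k ones} ν(ρ) satisfy ν_k = ν_{n−k} for all k = 0,…,n. -/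
/-!
The range of `A` on invariant vectors lies in the space `W` of invariant `ν` with
`ν_k = ν_{n-k}`: relabelling `[n]` commutes with `A_{n,p}`, and flipping every colour turns
`A_{n,p}` into `A_{n,1-p}`, which is `A_{n,p}` again at `p = 1/2`. Since `S_n` is transitive on
the configurations with `k` ones, an invariant `ν` is determined by its level sums, and an element
of `W` by `ν_0, …, ν_{⌊n/2⌋}`; so `dim W ≤ ⌊n/2⌋ + 1`.

Conversely, let `q_j` be the indicator of the partitions having a block of size `n - j`. A
configuration constant on such a block has at most `j` or at least `n - j` ones, so for
`j, k ≤ n/2` the level sum `(A q_j)_k` vanishes when `j < k` and is positive when `j = k`. This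
triangular matrix is invertible, hence the range has dimension at least `⌊n/2⌋ + 1` and is `W`.

Invariant vectors on `B_n` are exactly the functions of the block-size partition, because two set
partitions with the same block sizes differ by a permutation; so `dim Q^Inv = P_n`, and
rank–nullity gives the kernel.
-/

open Finset

/-- The subspace of `S_n`-invariant vectors in `ℝ^{B_n}`: `q` is invariant when its value
agrees on any two partitions related by a permutation of `[n]`. -/
def QInv (n : ℕ) : Submodule ℝ (Finpartition (univ : Finset (Fin n)) → ℝ) where
  carrier := {q | ∀ g : Equiv.Perm (Fin n), ∀ σ τ : Finpartition (univ : Finset (Fin n)),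
    τ.parts = σ.parts.image (fun B => B.image g) → q τ = q σ}
  add_mem' := by
    intro a b ha hb g σ τ h
    simp only [Pi.add_apply, ha g σ τ h, hb g σ τ h]
  zero_mem' := by intro g σ τ h; rfl
  smul_mem' := by
    intro c a ha g σ τ h
    simp only [Pi.smul_apply, ha g σ τ h]

/-- `ν` (as a vector on `{0,1}^n`) is invariant under the natural `S_n`-action. -/
def VInvariant {n : ℕ} (ν : (Fin n → Bool) → ℝ) : Prop :=
  ∀ g : Equiv.Perm (Fin n), ∀ ρ : Fin n → Bool, ν (ρ ∘ g) = ν ρ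

/-- The level sum `ν_k`: total mass of configurations with exactly `k` ones. -/
def levelSum {n : ℕ} (ν : (Fin n → Bool) → ℝ) (k : ℕ) : ℝ :=
  ∑ ρ ∈ univ.filter
    (fun ρ : Fin n → Bool => (univ.filter fun i => ρ i = true).card = k), ν ρ

theorem Finset.exists_equiv_of_map_eq {α β : Type*} [DecidableEq β] {s t : Finset α}
    (f : α → β) (h : s.val.map f = t.val.map f) : ∃ e : s ≃ t, ∀ x, f (e x) = f x := by
  classical
  have hfiber (b : β) : Fintype.card {x : s // f x = b} = Fintype.card {x : t // f x = b} := by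
    simp only [Fintype.card_subtype, univ_eq_attach, filter_attach (fun x => f x = b), card_map,
      card_attach]
    simpa [card_def, Multiset.count_map, eq_comm] using congrArg (Multiset.count b) h
  exact ⟨.ofFiberEquiv fun b => Fintype.equivOfCardEq (hfiber b),
    Equiv.ofFiberEquiv_map (f := fun x : s => f x) (g := fun x : t => f x) _⟩

namespace Finpartition

variable {α : Type*} [DecidableEq α]

def shape {s : Finset α} (P : Finpartition s) : Nat.Partition #s where
  parts := P.parts.val.map card
  parts_pos hi := by
    obtain ⟨B, hB, rfl⟩ := Multiset.mem_map.1 hi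
    exact card_pos.2 (P.nonempty_of_mem_parts hB)
  parts_sum := P.sum_card_parts

theorem mem_shape_parts {s : Finset α} {P : Finpartition s} {m : ℕ} :
    m ∈ P.shape.parts ↔ ∃ B ∈ P.parts, #B = m :=
  Multiset.mem_map

theorem shape_surjective {s : Finset α} : Function.Surjective (shape (s := s)) := by
  suffices h : ∀ (M : Multiset ℕ) (s : Finset α), (∀ m ∈ M, 0 < m) → M.sum = #s →
      ∃ P : Finpartition s, P.parts.val.map card = M from
    fun p => (h p.parts s (fun _ => p.parts_pos) p.parts_sum).imp fun _ => Nat.Partition.ext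
  intro M
  induction M using Multiset.induction_on with
  | empty =>
    intro s _ hs
    refine ⟨⊥, ?_⟩
    simp [card_eq_zero.1 hs.symm]
  | cons a M ih =>
    intro s hpos hsum
    rw [Multiset.sum_cons] at hsum
    have ha : 0 < a := hpos a (Multiset.mem_cons_self _ _)
    obtain ⟨B, hBs, hB⟩ := exists_subset_card_eq (show a ≤ #s by omega)
    obtain ⟨P, hP⟩ := ih (s \ B) (fun m hm => hpos m (Multiset.mem_cons_of_mem hm))
      (by rw [card_sdiff_of_subset hBs]; omega)
    obtain ⟨b, hb⟩ := card_pos.1 (hB ▸ ha)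
    have hBP : B ∉ P.parts := fun hBP => (mem_sdiff.1 (P.le hBP hb)).2 hb
    refine ⟨P.extend (nonempty_iff_ne_empty.1 ⟨b, hb⟩) sdiff_disjoint
      (sdiff_union_of_subset hBs), ?_⟩
    rw [extend_parts, insert_val_of_notMem hBP, Multiset.map_cons, hB, hP]

theorem exists_mem_shape_parts {s : Finset α} {m : ℕ} (hm : 0 < m) (hms : m ≤ #s) :
    ∃ P : Finpartition s, m ∈ P.shape.parts := by
  obtain ⟨P, hP⟩ := shape_surjective (Nat.Partition.ofSums #s (m ::ₘ .replicate (#s - m) 1)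
    (by simp; omega))
  exact ⟨P, by simp [hP, Nat.Partition.ofSums, hm.ne']⟩

theorem mem_iff_mem_of_mem_parts {s B C : Finset α} {P : Finpartition s} {i j : α}
    (hB : B ∈ P.parts) (hC : C ∈ P.parts) (hi : i ∈ C) (hj : j ∈ C) : i ∈ B ↔ j ∈ B :=
  ⟨fun hiB => P.eq_of_mem_parts hB hC hiB hi ▸ hj,
    fun hjB => P.eq_of_mem_parts hB hC hjB hj ▸ hi⟩

variable [Fintype α]

instance : SMul (Equiv.Perm α) (Finpartition (univ : Finset α)) where
  smul g P := (P.map { g.finsetCongr with map_rel_iff' := by simp }).copy (by simp)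

theorem parts_perm_smul (g : Equiv.Perm α) (P : Finpartition (univ : Finset α)) :
    (g • P).parts = P.parts.image (·.image g) := by
  change P.parts.map _ = _
  rw [map_eq_image]
  exact congrArg (image · P.parts) (funext fun B => map_eq_image _ B)

instance : MulAction (Equiv.Perm α) (Finpartition (univ : Finset α)) where
  one_smul P := by ext : 1; simp [parts_perm_smul]
  mul_smul g h P := by ext : 1; simp [parts_perm_smul, image_image, Function.comp_def]

theorem shape_perm_smul (g : Equiv.Perm α) (P : Finpartition (univ : Finset α)) :
    (g • P).shape = P.shape := by
  ext : 1
  simp only [shape, parts_perm_smul]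
  rw [image_val_of_injOn (image_injective g.injective).injOn, Multiset.map_map]
  exact Multiset.map_congr rfl fun B _ => card_image_of_injective B g.injective

theorem exists_perm_smul_eq_of_shape_eq {P Q : Finpartition (univ : Finset α)}
    (h : P.shape = Q.shape) : ∃ g : Equiv.Perm α, g • P = Q := by
  obtain ⟨e, he⟩ := exists_equiv_of_map_eq card (congrArg Nat.Partition.parts h)
  let F (B : P.parts) : (B : Finset α) ≃ (e B : Finset α) := equivOfCardEq (he B).symm
  -- `g` maps each block `B` of `P` onto the block `e B` of `Q`, which has the same size.
  let g : Equiv.Perm α := (Equiv.subtypeUnivEquiv mem_univ).symm.trans <|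
    P.equivSigmaParts.trans <| (Equiv.sigmaCongr e F).trans <|
    Q.equivSigmaParts.symm.trans (Equiv.subtypeUnivEquiv mem_univ)
  have hg {B : Finset α} (hB : B ∈ P.parts) : B.image g = e ⟨B, hB⟩ := by
    refine eq_of_subset_of_card_le (fun y hy => ?_)
      (by rw [card_image_of_injective _ g.injective, he])
    obtain ⟨x, hx, rfl⟩ := mem_image.1 hy
    have hpart : (⟨P.part x, P.part_mem.2 (mem_univ x)⟩ : P.parts) = ⟨B, hB⟩ :=
      Subtype.ext (P.part_eq_of_mem hB hx)
    exact hpart ▸ (F _ ⟨x, P.mem_part (mem_univ x)⟩).2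
  refine ⟨g, Finpartition.ext ?_⟩
  ext C
  rw [parts_perm_smul, mem_image]
  constructor
  · rintro ⟨B, hB, rfl⟩
    exact hg hB ▸ (e ⟨B, hB⟩).2
  · intro hC
    refine ⟨e.symm ⟨C, hC⟩, (e.symm ⟨C, hC⟩).2, ?_⟩
    rw [hg (e.symm ⟨C, hC⟩).2, Subtype.coe_eta, e.apply_symm_apply]

end Finpartition

theorem Finset.card_le_or_card_filter_add_le {α : Type*} [Fintype α] {ρ : α → Bool}
    {B : Finset α} (h : ∀ i ∈ B, ∀ j ∈ B, ρ i = ρ j) :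
    #B ≤ #{i | ρ i = true} ∨ #{i | ρ i = true} + #B ≤ Fintype.card α := by
  classical
  rcases B.eq_empty_or_nonempty with rfl | ⟨b, hb⟩
  · simp
  cases hρb : ρ b
  · have hsub : ({i | ρ i = true} : Finset α) ⊆ Bᶜ := fun i hi =>
      mem_compl.2 fun hiB => by simp_all [h i hiB b hb]
    have := card_le_card hsub
    rw [card_compl] at this
    have := card_le_univ B
    omega
  · exact .inl (card_le_card fun i hi => by simp [h i hi b hb, hρb])

theorem Finset.card_filter_not_eq_true {α : Type*} [Fintype α] (ρ : α → Bool) :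
    #{i | (!ρ i) = true} = Fintype.card α - #{i | ρ i = true} := by
  classical
  rw [← card_compl, compl_filter]
  simp

theorem Matrix.span_row_eq_top_of_isLowerTriangular {K m : Type*} [Field K] [Fintype m]
    [DecidableEq m] [LinearOrder m] {M : Matrix m m K} (hM : M.IsLowerTriangular)
    (hdiag : ∀ i, M i i ≠ 0) : Submodule.span K (Set.range M.row) = ⊤ := by
  have hdet : IsUnit M.det := by
    rw [det_of_isLowerTriangular M hM]
    exact (prod_ne_zero_iff.2 fun i _ => hdiag i).isUnit
  exact (linearIndependent_rows_iff_isUnit.2 ((isUnit_iff_isUnit_det M).2 hdet))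
    |>.span_eq_top_of_card_eq_finrank' (by simp)

section

open Finpartition

variable {n : ℕ}

theorem colorMap_apply (p : ℝ) (q : Finpartition (univ : Finset (Fin n)) → ℝ)
    (ρ : Fin n → Bool) : colorMap n p q ρ = ∑ σ, colorMatrix n p ρ σ * q σ := by
  simp [colorMap, Matrix.mulVec, dotProduct]

theorem colorMatrix_nonneg {p : ℝ} (hp0 : 0 ≤ p) (hp1 : p ≤ 1) (ρ : Fin n → Bool)
    (σ : Finpartition (univ : Finset (Fin n))) : 0 ≤ colorMatrix n p ρ σ := by
  have : 0 ≤ 1 - p := sub_nonneg.2 hp1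
  unfold colorMatrix
  split_ifs <;> positivity

theorem colorMatrix_pos {p : ℝ} (hp0 : 0 < p) (hp1 : p < 1) {ρ : Fin n → Bool}
    {σ : Finpartition (univ : Finset (Fin n))}
    (h : ∀ B ∈ σ.parts, ∀ i ∈ B, ∀ j ∈ B, ρ i = ρ j) : 0 < colorMatrix n p ρ σ := by
  have : 0 < 1 - p := sub_pos.2 hp1
  rw [colorMatrix, if_pos h]
  positivity

theorem colorMatrix_not (p : ℝ) (ρ : Fin n → Bool) (σ : Finpartition (univ : Finset (Fin n))) :
    colorMatrix n p (fun i => !ρ i) σ = colorMatrix n (1 - p) ρ σ := by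
  unfold colorMatrix
  simp only [Bool.not_inj_iff]
  split_ifs with h
  · have hfilter : σ.parts.filter (fun B => ∀ i ∈ B, (!ρ i) = true) =
        σ.parts.filter (fun B => ¬ ∀ i ∈ B, ρ i = true) := by
      refine filter_congr fun B hB => ?_
      obtain ⟨b, hb⟩ := σ.nonempty_of_mem_parts hB
      simp only [Bool.not_eq_true', not_forall, Bool.not_eq_true]
      exact ⟨fun hB' => ⟨b, hb, hB' b hb⟩,
        fun ⟨c, hc, hρc⟩ i hi => (h B hB i hi c hc).trans hρc⟩
    have hcard := card_filter_add_card_filter_not (s := σ.parts) (fun B => ∀ i ∈ B, ρ i = true)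
    rw [hfilter, sub_sub_cancel, ← hcard, Nat.add_sub_cancel_left, Nat.add_sub_cancel,
      mul_comm]
  · rfl

theorem colorMap_apply_not (p : ℝ) (q : Finpartition (univ : Finset (Fin n)) → ℝ)
    (ρ : Fin n → Bool) : colorMap n p q (fun i => !ρ i) = colorMap n (1 - p) q ρ := by
  simp only [colorMap_apply, colorMatrix_not]

theorem colorMatrix_comp_perm (p : ℝ) (g : Equiv.Perm (Fin n)) (ρ : Fin n → Bool)
    (σ : Finpartition (univ : Finset (Fin n))) :
    colorMatrix n p (ρ ∘ g) σ = colorMatrix n p ρ (g • σ) := by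
  have hinj : Function.Injective fun B : Finset (Fin n) => B.image g :=
    image_injective g.injective
  have hfilter : (σ.parts.image (·.image g)).filter (fun B => ∀ i ∈ B, ρ i = true) =
      (σ.parts.filter fun B => ∀ i ∈ B, ρ (g i) = true).image (·.image g) := by
    rw [filter_image]
    simp
  simp only [colorMatrix, parts_perm_smul, hfilter, card_image_of_injective _ hinj,
    forall_mem_image, Function.comp_apply]

theorem mem_QInv_iff {q : Finpartition (univ : Finset (Fin n)) → ℝ} :
    q ∈ QInv n ↔ ∀ (g : Equiv.Perm (Fin n)) σ, q (g • σ) = q σ :=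
  ⟨fun hq g σ => hq g σ _ (parts_perm_smul g σ),
    fun hq g σ _ h => Finpartition.ext (h.trans (parts_perm_smul g σ).symm) ▸ hq g σ⟩

theorem QInv_eq_range_funLeft_shape :
    QInv n = LinearMap.range (LinearMap.funLeft ℝ ℝ (shape (s := univ))) := by
  ext q
  rw [mem_QInv_iff, LinearMap.mem_range]
  constructor
  · intro hq
    refine ⟨fun p => q (shape_surjective p).choose, funext fun σ => ?_⟩
    obtain ⟨g, hg⟩ := exists_perm_smul_eq_of_shape_eq (shape_surjective σ.shape).choose_spec
    exact (hq g _).symm.trans (congrArg q hg)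
  · rintro ⟨f, rfl⟩ g σ
    simp only [LinearMap.funLeft_apply, shape_perm_smul]

theorem finrank_QInv : Module.finrank ℝ (QInv n) = Fintype.card (Nat.Partition n) := by
  rw [QInv_eq_range_funLeft_shape, LinearMap.finrank_range_of_inj
    (LinearMap.funLeft_injective_of_surjective _ _ _ shape_surjective),
    Module.finrank_fintype_fun_eq_card, card_univ, Fintype.card_fin]

theorem vInvariant_colorMap (p : ℝ) {q : Finpartition (univ : Finset (Fin n)) → ℝ}
    (hq : q ∈ QInv n) : VInvariant (colorMap n p q) := by
  intro g ρ
  simp only [colorMap_apply, colorMatrix_comp_perm]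
  exact Fintype.sum_bijective _ (MulAction.bijective g) _ _ fun σ => by rw [mem_QInv_iff.1 hq]

theorem levelSum_add (ν μ : (Fin n → Bool) → ℝ) (k : ℕ) :
    levelSum (ν + μ) k = levelSum ν k + levelSum μ k :=
  sum_add_distrib

theorem levelSum_smul (c : ℝ) (ν : (Fin n → Bool) → ℝ) (k : ℕ) :
    levelSum (c • ν) k = c * levelSum ν k :=
  (mul_sum _ _ _).symm

theorem levelSum_comp_not (ν : (Fin n → Bool) → ℝ) {k : ℕ} (hk : k ≤ n) :
    levelSum (fun ρ => ν fun i => !ρ i) k = levelSum ν (n - k) := by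
  refine sum_nbij' (fun ρ i => !ρ i) (fun ρ i => !ρ i) ?_ ?_ (by simp) (by simp) fun _ _ => rfl
  all_goals
    intro ρ hρ
    simp only [mem_filter, mem_univ, true_and, card_filter_not_eq_true, Fintype.card_fin] at hρ ⊢
    omega

theorem levelSum_colorMap_half_symm (q : Finpartition (univ : Finset (Fin n)) → ℝ) {k : ℕ}
    (hk : k ≤ n) : levelSum (colorMap n (1/2) q) k = levelSum (colorMap n (1/2) q) (n - k) := by
  rw [← levelSum_comp_not _ hk]
  congr 1
  funext ρ
  rw [colorMap_apply_not]
  norm_num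

theorem VInvariant.apply_eq_of_card_eq {ν : (Fin n → Bool) → ℝ} (hν : VInvariant ν)
    {ρ ρ' : Fin n → Bool} (h : #{i | ρ i = true} = #{i | ρ' i = true}) : ν ρ = ν ρ' := by
  obtain ⟨g, hg⟩ := Equiv.Perm.exists_map_finset_eq _ _ h.symm
  have hρ : ρ ∘ g = ρ' := funext fun x =>
    Bool.eq_iff_iff.2 (by simpa using (Finset.ext_iff.1 hg (g x)).symm)
  exact (hν g ρ).symm.trans (congrArg ν hρ)

theorem VInvariant.eq_zero_of_levelSum_eq_zero {ν : (Fin n → Bool) → ℝ} (hν : VInvariant ν)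
    (h : ∀ k ≤ n, levelSum ν k = 0) : ν = 0 := by
  funext ρ
  have hlevel : levelSum ν #{i | ρ i = true} =
      #{ρ' : Fin n → Bool | #{i | ρ' i = true} = #{i | ρ i = true}} * ν ρ := by
    rw [levelSum, sum_congr rfl fun ρ' hρ' => hν.apply_eq_of_card_eq (mem_filter.1 hρ').2,
      sum_const, nsmul_eq_mul]
  have hcard : 0 < #{ρ' : Fin n → Bool | #{i | ρ' i = true} = #{i | ρ i = true}} :=
    card_pos.2 ⟨ρ, mem_filter.2 ⟨mem_univ ρ, rfl⟩⟩
  rw [h _ (by simpa using card_filter_le univ fun i => ρ i = true)] at hlevel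
  exact (mul_eq_zero.1 hlevel.symm).resolve_left (Nat.cast_ne_zero.2 hcard.ne')

def levelSymmetricInvariants (n : ℕ) : Submodule ℝ ((Fin n → Bool) → ℝ) where
  carrier := {ν | VInvariant ν ∧ ∀ k ≤ n, levelSum ν k = levelSum ν (n - k)}
  add_mem' := fun ⟨ha, ha'⟩ ⟨hb, hb'⟩ =>
    ⟨fun g ρ => by simp only [Pi.add_apply, ha g ρ, hb g ρ],
      fun k hk => by rw [levelSum_add, levelSum_add, ha' k hk, hb' k hk]⟩
  zero_mem' := ⟨fun _ _ => rfl, fun _ _ => by simp [levelSum]⟩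
  smul_mem' c _ := fun ⟨ha, ha'⟩ =>
    ⟨fun g ρ => by simp only [Pi.smul_apply, ha g ρ],
      fun k hk => by rw [levelSum_smul, levelSum_smul, ha' k hk]⟩

def levelSumMap (n m : ℕ) : ((Fin n → Bool) → ℝ) →ₗ[ℝ] (Fin m → ℝ) where
  toFun ν k := levelSum ν k
  map_add' ν μ := funext fun k => levelSum_add ν μ k
  map_smul' c ν := funext fun k => levelSum_smul c ν k

theorem finrank_levelSymmetricInvariants_le :
    Module.finrank ℝ (levelSymmetricInvariants n) ≤ n / 2 + 1 := by
  have hinj : Function.Injective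
      ((levelSumMap n (n / 2 + 1)).comp (levelSymmetricInvariants n).subtype) := by
    rw [← LinearMap.ker_eq_bot, LinearMap.ker_eq_bot']
    rintro ⟨ν, hν, hsymm⟩ h0
    have hlow (k : ℕ) (hk : k ≤ n / 2) : levelSum ν k = 0 := congrFun h0 ⟨k, by omega⟩
    refine Subtype.ext (hν.eq_zero_of_levelSum_eq_zero fun k hk => ?_)
    rcases le_or_gt k (n / 2) with hk2 | hk2
    · exact hlow k hk2
    · rw [hsymm k hk]
      exact hlow _ (by omega)
  simpa using LinearMap.finrank_le_finrank_of_injective hinj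

theorem range_colorMap_half_le :
    LinearMap.range ((colorMap n (1/2)).domRestrict (QInv n)) ≤ levelSymmetricInvariants n := by
  rintro _ ⟨q, rfl⟩
  rw [LinearMap.domRestrict_apply]
  exact ⟨vInvariant_colorMap _ q.2, fun k hk => levelSum_colorMap_half_symm q.1 hk⟩

def blockSizeIndicator (n m : ℕ) (σ : Finpartition (univ : Finset (Fin n))) : ℝ :=
  if m ∈ σ.shape.parts then 1 else 0

theorem blockSizeIndicator_mem_QInv (m : ℕ) : blockSizeIndicator n m ∈ QInv n :=
  mem_QInv_iff.2 fun g σ => by simp only [blockSizeIndicator, shape_perm_smul]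

theorem levelSum_colorMap_blockSizeIndicator_eq_zero (p : ℝ) {m k : ℕ} (hkm : k < m)
    (hmk : n < k + m) : levelSum (colorMap n p (blockSizeIndicator n m)) k = 0 := by
  refine sum_eq_zero fun ρ hρ => ?_
  rw [colorMap_apply]
  refine sum_eq_zero fun σ _ => ?_
  unfold blockSizeIndicator
  split_ifs with hσ
  · obtain ⟨B, hB, rfl⟩ := mem_shape_parts.1 hσ
    rw [colorMatrix, if_neg fun h => ?_, zero_mul]
    have := card_le_or_card_filter_add_le (h B hB)
    simp only [mem_filter, mem_univ, true_and] at hρ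
    simp only [Fintype.card_fin] at this
    omega
  · rw [mul_zero]

theorem levelSum_colorMap_blockSizeIndicator_pos {p : ℝ} (hp0 : 0 < p) (hp1 : p < 1) {m : ℕ}
    (hm : 0 < m) (hmn : m ≤ n) :
    0 < levelSum (colorMap n p (blockSizeIndicator n m)) (n - m) := by
  obtain ⟨σ, hσ⟩ := exists_mem_shape_parts (s := (univ : Finset (Fin n))) hm
    (by simpa using hmn)
  obtain ⟨B, hB, rfl⟩ := mem_shape_parts.1 hσ
  have hterm (ρ τ) : 0 ≤ colorMatrix n p ρ τ * blockSizeIndicator n #B τ :=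
    mul_nonneg (colorMatrix_nonneg hp0.le hp1.le ρ τ)
      (by unfold blockSizeIndicator; split_ifs <;> norm_num)
  simp only [levelSum, colorMap_apply]
  refine sum_pos' (fun ρ _ => sum_nonneg fun τ _ => hterm ρ τ)
    ⟨fun i => decide (i ∉ B), ?_, ?_⟩
  · simp [filter_not, card_sdiff]
  · refine sum_pos' (fun τ _ => hterm _ τ)
      ⟨σ, mem_univ _, mul_pos ?_ (by simp [blockSizeIndicator, hσ])⟩
    exact colorMatrix_pos hp0 hp1 fun C hC i hi j hj => by
      simp [mem_iff_mem_of_mem_parts hB hC hi hj]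

theorem le_finrank_range_colorMap_half (hn : 1 ≤ n) :
    n / 2 + 1 ≤
      Module.finrank ℝ (LinearMap.range ((colorMap n (1/2)).domRestrict (QInv n))) := by
  let M : Matrix (Fin (n / 2 + 1)) (Fin (n / 2 + 1)) ℝ := .of fun j k =>
    levelSum (colorMap n (1/2) (blockSizeIndicator n (n - j))) k
  have hM : M.IsLowerTriangular := fun j k hjk => by
    have : (j : ℕ) < k := OrderDual.toDual_lt_toDual.1 hjk
    exact levelSum_colorMap_blockSizeIndicator_eq_zero _ (by omega) (by omega)
  have hdiag (j : Fin (n / 2 + 1)) : 0 < M j j := by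
    have := levelSum_colorMap_blockSizeIndicator_pos (n := n) (p := 1/2) (m := n - j)
      (by norm_num) (by norm_num) (by omega) (by omega)
    rwa [Nat.sub_sub_self (by omega)] at this
  have hmap : (LinearMap.range ((colorMap n (1/2)).domRestrict (QInv n))).map
      (levelSumMap n (n / 2 + 1)) = ⊤ := by
    rw [eq_top_iff, ← Matrix.span_row_eq_top_of_isLowerTriangular hM fun j => (hdiag j).ne',
      Submodule.span_le]
    rintro _ ⟨j, rfl⟩
    exact ⟨_, ⟨⟨_, blockSizeIndicator_mem_QInv _⟩, rfl⟩, rfl⟩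
  have := Submodule.finrank_map_le (levelSumMap n (n / 2 + 1))
    (LinearMap.range ((colorMap n (1/2)).domRestrict (QInv n)))
  rwa [hmap, finrank_top, Module.finrank_fintype_fun_eq_card, Fintype.card_fin] at this

end

/-- the restriction of `A_{n,1/2}` to the `S_n`-invariant subspace has rank
`⌊n/2⌋ + 1`, nullity `P_n - ⌊n/2⌋ - 1`, and its range is the set of invariant `ν` whose
level sums satisfy `ν_k = ν_{n-k}` for all `k`. -/
theorem rank_range_colorMap_inv_half (n : ℕ) (hn : 1 ≤ n) :
    Module.finrank ℝ
        (LinearMap.range ((colorMap n (1/2)).domRestrict (QInv n))) = n / 2 + 1 ∧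
    Module.finrank ℝ (LinearMap.ker ((colorMap n (1/2)).domRestrict (QInv n))) =
      Fintype.card (Nat.Partition n) - (n / 2 + 1) ∧
    (LinearMap.range ((colorMap n (1/2)).domRestrict (QInv n)) : Set ((Fin n → Bool) → ℝ)) =
      {ν : (Fin n → Bool) → ℝ | VInvariant ν ∧
        ∀ k ≤ n, levelSum ν k = levelSum ν (n - k)} := by
  set A := (colorMap n (1/2)).domRestrict (QInv n)
  have hrank : Module.finrank ℝ (LinearMap.range A) = n / 2 + 1 :=
    le_antisymm ((Submodule.finrank_mono range_colorMap_half_le).trans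
      finrank_levelSymmetricInvariants_le) (le_finrank_range_colorMap_half hn)
  refine ⟨hrank, ?_, ?_⟩
  · have := A.finrank_range_add_finrank_ker
    rw [finrank_QInv] at this
    omega
  · have : LinearMap.range A = levelSymmetricInvariants n :=
      Submodule.eq_of_le_of_finrank_le range_colorMap_half_le
        (hrank ▸ finrank_levelSymmetricInvariants_le)
    rw [this]
    rfl
end

section
/- Let n ≥ 1 and consider the 2^n × |B_n| real matrix A with rows indexed by subsets S ⊆ [n] and columns indexed by partitions σ ∈ B_n, defined by A(S,σ) = 1 if the restriction σ_S of σ to S has at most one odd-sized block, and A(S,σ) = 0 otherwise. Then A has rank 2^n − n. -/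
/-!
Let `ĉ = H c` be the Walsh–Hadamard transform of a vector `c` indexed by subsets of `[n]`, with
`H W S = (-1) ^ |W ∩ S|`, so that `H² = 2ⁿ`. If `σ` has `p ≤ 3` blocks and `k` of them meet `S`
oddly, then `k ≡ |S| (mod 2)` and `k ≤ 3`, which makes the entry `[k ≤ 1]` an affine function of
the signs `(-1) ^ |B ∩ S|` (`B ∈ σ`) and `(-1) ^ |S|`. Hence for `c` in the left kernel the columns
with at most three blocks force `ĉ ∅ = 0` and `∑_{B ∈ σ} ĉ B = ĉ [n]`, so `ĉ` is additive on
disjoint sets and `ĉ W = ∑_{i ∈ W} ĉ {i}`. Inverting `H`, the kernel is spanned by the `n`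
independent vectors `e_{i} - e_∅`, all of which lie in it since rows `S` with `|S| ≤ 1` are
constantly `1`.
-/

open Finset Matrix

section Walsh

variable {ι : Type*} [DecidableEq ι]

variable (ι) in
def walshMatrix : Matrix (Finset ι) (Finset ι) ℝ :=
  of fun W S => (-1) ^ #(W ∩ S)

lemma walshMatrix_apply (W S : Finset ι) : walshMatrix ι W S = (-1) ^ #(W ∩ S) := rfl

lemma walshMatrix_apply_comm (W S : Finset ι) : walshMatrix ι W S = walshMatrix ι S W := by
  rw [walshMatrix_apply, walshMatrix_apply, inter_comm]

@[simp]
lemma walshMatrix_empty_apply (S : Finset ι) : walshMatrix ι ∅ S = 1 := by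
  rw [walshMatrix_apply, empty_inter, card_empty, pow_zero]

lemma walshMatrix_apply_eq_prod (W S : Finset ι) :
    walshMatrix ι W S = ∏ i ∈ W, if i ∈ S then -1 else 1 := by
  rw [prod_ite_mem, prod_const, walshMatrix_apply]

variable [Fintype ι]

lemma walshMatrix_mul_self : walshMatrix ι * walshMatrix ι = (2 ^ Fintype.card ι : ℝ) • 1 := by
  ext S T
  have hprod : ∀ W, walshMatrix ι S W * walshMatrix ι W T =
      ∏ i ∈ W, (if i ∈ S then -1 else 1) * (if i ∈ T then -1 else 1) := fun W => by
    rw [walshMatrix_apply_comm S, walshMatrix_apply_eq_prod, walshMatrix_apply_eq_prod,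
      prod_mul_distrib]
  rw [mul_apply, Matrix.smul_apply, one_apply]
  simp only [hprod]
  rw [← powerset_univ, ← prod_one_add]
  split_ifs with hST
  · subst hST
    have : ∀ i, (1 : ℝ) + (if i ∈ S then -1 else 1) * (if i ∈ S then -1 else 1) = 2 := fun i => by
      split_ifs <;> norm_num
    rw [Finset.prod_congr rfl fun i _ => this i, prod_const, card_univ, smul_eq_mul, mul_one]
  · obtain ⟨i, hi⟩ : ∃ i, ¬(i ∈ S ↔ i ∈ T) := by
      by_contra! h
      exact hST (ext h)
    rw [smul_zero]
    refine prod_eq_zero (mem_univ i) ?_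
    by_cases hS : i ∈ S <;> simp_all

lemma walshMatrix_mulVec_injective : Function.Injective (walshMatrix ι).mulVec := by
  intro c d h
  have h2 := congrArg (walshMatrix ι).mulVec h
  simp only [mulVec_mulVec, walshMatrix_mul_self, smul_mulVec, one_mulVec] at h2
  exact smul_right_injective _ (by positivity) h2

end Walsh

lemma Finpartition.sum_card_inter {α : Type*} [DecidableEq α] {s : Finset α}
    (P : Finpartition s) (t : Finset α) : ∑ B ∈ P.parts, #(B ∩ t) = #(s ∩ t) := by
  conv_rhs => rw [← P.biUnion_parts, biUnion_inter]
  exact (card_biUnion (P.disjoint.mono fun B => inter_subset_left)).symm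

section OddBlocks

variable {ι : Type*} [Fintype ι] [DecidableEq ι]

def oddBlockCount (σ : Finpartition (univ : Finset ι)) (S : Finset ι) : ℕ :=
  #{B ∈ σ.parts | Odd #(B ∩ S)}

variable (ι) in
def oddBlockMatrix : Matrix (Finset ι) (Finpartition (univ : Finset ι)) ℝ :=
  of fun S σ => if oddBlockCount σ S ≤ 1 then 1 else 0

variable (σ : Finpartition (univ : Finset ι)) (S : Finset ι)

lemma oddBlockCount_le_card_parts : oddBlockCount σ S ≤ #σ.parts := card_filter_le _ _

lemma oddBlockCount_le_card : oddBlockCount σ S ≤ #S := by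
  calc oddBlockCount σ S = ∑ B ∈ σ.parts with Odd #(B ∩ S), 1 := card_eq_sum_ones _
    _ ≤ ∑ B ∈ σ.parts with Odd #(B ∩ S), #(B ∩ S) :=
        sum_le_sum fun B hB => (mem_filter.mp hB).2.pos
    _ ≤ ∑ B ∈ σ.parts, #(B ∩ S) := sum_le_sum_of_subset (filter_subset _ _)
    _ = #S := by rw [σ.sum_card_inter, univ_inter]

lemma odd_oddBlockCount_iff : Odd (oddBlockCount σ S) ↔ Odd #S := by
  rw [oddBlockCount, ← odd_sum_iff_odd_card_odd, σ.sum_card_inter, univ_inter]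

lemma oddBlockMatrix_apply_of_card_le_one (hS : #S ≤ 1) : oddBlockMatrix ι S σ = 1 :=
  if_pos ((oddBlockCount_le_card σ S).trans hS)

lemma sum_walshMatrix_parts :
    ∑ B ∈ σ.parts, walshMatrix ι B S = #σ.parts - 2 * oddBlockCount σ S := by
  have hsign : ∀ m : ℕ, (-1 : ℝ) ^ m = 1 - 2 * if Odd m then 1 else 0 := fun m => by
    rcases Nat.even_or_odd m with h | h
    · rw [h.neg_one_pow, if_neg (Nat.not_odd_iff_even.mpr h)]; norm_num
    · rw [h.neg_one_pow, if_pos h]; norm_num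
  simp only [walshMatrix_apply, hsign, sum_sub_distrib, ← mul_sum, oddBlockCount, card_filter]
  simp

lemma walshMatrix_univ_apply :
    walshMatrix ι univ S = (-1) ^ oddBlockCount σ S := by
  rw [walshMatrix_apply, univ_inter]
  exact neg_one_pow_congr <| by
    rw [← Nat.not_odd_iff_even, ← Nat.not_odd_iff_even, odd_oddBlockCount_iff]

lemma oddBlockMatrix_apply_of_card_parts_le_three (hσ : #σ.parts ≤ 3) :
    oddBlockMatrix ι S σ =
      (5 - #σ.parts) / 4 + (∑ B ∈ σ.parts, walshMatrix ι B S - walshMatrix ι univ S) / 4 := by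
  rw [sum_walshMatrix_parts, walshMatrix_univ_apply σ]
  have hk : oddBlockCount σ S ≤ 3 := (oddBlockCount_le_card_parts σ S).trans hσ
  -- the right side is `1 + (1 - 2k - (-1) ^ k) / 4`, which equals `[k ≤ 1]` for `k ≤ 3` only
  show (if oddBlockCount σ S ≤ 1 then (1 : ℝ) else 0) = _
  interval_cases oddBlockCount σ S <;> norm_num <;> ring

end OddBlocks

section Additivity

variable {ι M : Type*} [Fintype ι] [DecidableEq ι] [AddCommGroup M] {f : Finset ι → M}

lemma add_add_eq_of_sum_parts_eq (h0 : f ∅ = 0)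
    (hf : ∀ σ : Finpartition (univ : Finset ι), #σ.parts ≤ 3 → ∑ B ∈ σ.parts, f B = f univ)
    {A B C : Finset ι} (hAB : Disjoint A B) (hAC : Disjoint A C) (hBC : Disjoint B C)
    (hU : A ∪ B ∪ C = univ) : f A + f B + f C = f univ := by
  -- a set disjoint from itself is empty, so coincidences among `A, B, C` do not affect the sum
  have sum_insert_of_disjoint : ∀ {X : Finset ι} {P : Finset (Finset ι)}, (∀ Y ∈ P, Disjoint X Y) →
      ∑ Y ∈ insert X P, f Y = f X + ∑ Y ∈ P, f Y := fun {X P} hX => by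
    by_cases hXP : X ∈ P
    · rw [insert_eq_of_mem hXP, (disjoint_self_iff_empty X).mp (hX X hXP), h0, zero_add]
    · exact sum_insert hXP
  have hindep : ({A, B, C} : Finset (Finset ι)).SupIndep id := by
    rw [supIndep_iff_pairwiseDisjoint]
    simp [Set.pairwiseDisjoint_insert, hAB, hAC, hBC]
  have hsup : ({A, B, C} : Finset (Finset ι)).sup id = univ := by
    simpa [← union_assoc] using hU
  have h := hf (Finpartition.ofErase _ hindep hsup) (card_erase_le.trans card_le_three)
  rwa [Finpartition.ofErase_parts, bot_eq_empty, sum_erase _ h0,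
    sum_insert_of_disjoint (by simp [hAB, hAC]), sum_insert_of_disjoint (by simp [hBC]),
    sum_singleton, ← add_assoc] at h

lemma map_union_of_sum_parts_eq (h0 : f ∅ = 0)
    (hf : ∀ σ : Finpartition (univ : Finset ι), #σ.parts ≤ 3 → ∑ B ∈ σ.parts, f B = f univ)
    {A B : Finset ι} (hAB : Disjoint A B) : f (A ∪ B) = f A + f B := by
  have hA : Disjoint A (A ∪ B)ᶜ := disjoint_compl_right.mono_left subset_union_left
  have hB : Disjoint B (A ∪ B)ᶜ := disjoint_compl_right.mono_left subset_union_right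
  have h3 := add_add_eq_of_sum_parts_eq h0 hf hAB hA hB (by rw [union_compl])
  have h2 := add_add_eq_of_sum_parts_eq (B := ∅) h0 hf (disjoint_empty_right (A ∪ B))
    disjoint_compl_right (disjoint_empty_left _) (by rw [union_empty, union_compl])
  rw [h0, add_zero] at h2
  exact add_right_cancel (h2.trans h3.symm)

lemma eq_sum_singleton_of_sum_parts_eq (h0 : f ∅ = 0)
    (hf : ∀ σ : Finpartition (univ : Finset ι), #σ.parts ≤ 3 → ∑ B ∈ σ.parts, f B = f univ)
    (W : Finset ι) : f W = ∑ i ∈ W, f {i} := by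
  induction W using Finset.induction_on with
  | empty => rw [h0, sum_empty]
  | insert i W hi ih =>
    rw [sum_insert hi, ← ih, insert_eq,
      map_union_of_sum_parts_eq h0 hf (disjoint_singleton_left.mpr hi)]

end Additivity

section Kernel

variable {ι : Type*} [Fintype ι] [DecidableEq ι]

lemma walshMatrix_mulVec_relation {c : Finset ι → ℝ} (hc : c ᵥ* oddBlockMatrix ι = 0)
    (σ : Finpartition (univ : Finset ι)) (hσ : #σ.parts ≤ 3) :
    (5 - #σ.parts) * (walshMatrix ι *ᵥ c) ∅ + ∑ B ∈ σ.parts, (walshMatrix ι *ᵥ c) B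
      = (walshMatrix ι *ᵥ c) univ := by
  have h := congrFun hc σ
  simp only [vecMul, dotProduct, oddBlockMatrix_apply_of_card_parts_le_three σ _ hσ,
    Pi.zero_apply] at h
  have hterm : ∀ S, c S * ((5 - #σ.parts) / 4 +
      (∑ B ∈ σ.parts, walshMatrix ι B S - walshMatrix ι univ S) / 4) =
      ((5 - #σ.parts) * (walshMatrix ι ∅ S * c S) + ∑ B ∈ σ.parts, walshMatrix ι B S * c S
        - walshMatrix ι univ S * c S) / 4 := fun S => by
    rw [walshMatrix_empty_apply, ← sum_mul]
    ring
  simp only [hterm, ← sum_div, sum_sub_distrib, sum_add_distrib, ← mul_sum] at h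
  rw [sum_comm] at h
  simp only [mulVec, dotProduct]
  linarith

lemma walshMatrix_mulVec_empty_eq_zero [Nonempty ι] {c : Finset ι → ℝ}
    (hc : c ᵥ* oddBlockMatrix ι = 0) : (walshMatrix ι *ᵥ c) ∅ = 0 := by
  have h := walshMatrix_mulVec_relation hc (.indiscrete univ_nonempty.ne_empty) (by simp)
  rw [Finpartition.indiscrete_parts, sum_singleton, card_singleton, Nat.cast_one] at h
  linarith

lemma sum_parts_walshMatrix_mulVec [Nonempty ι] {c : Finset ι → ℝ}
    (hc : c ᵥ* oddBlockMatrix ι = 0) (σ : Finpartition (univ : Finset ι)) (hσ : #σ.parts ≤ 3) :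
    ∑ B ∈ σ.parts, (walshMatrix ι *ᵥ c) B = (walshMatrix ι *ᵥ c) univ := by
  simpa [walshMatrix_mulVec_empty_eq_zero hc] using walshMatrix_mulVec_relation hc σ hσ

def singletonSubEmpty (i : ι) : Finset ι → ℝ := Pi.single {i} 1 - Pi.single ∅ 1

lemma singletonSubEmpty_vecMul_oddBlockMatrix (i : ι) :
    singletonSubEmpty i ᵥ* oddBlockMatrix ι = 0 := by
  ext σ
  simp only [singletonSubEmpty, sub_vecMul, single_one_vecMul, Pi.sub_apply, row_apply,
    Pi.zero_apply]
  rw [oddBlockMatrix_apply_of_card_le_one σ _ (card_singleton i).le,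
    oddBlockMatrix_apply_of_card_le_one σ ∅ (by simp), sub_self]

lemma walshMatrix_mulVec_singletonSubEmpty (i : ι) (W : Finset ι) :
    (walshMatrix ι *ᵥ singletonSubEmpty i) W = if i ∈ W then -2 else 0 := by
  simp only [singletonSubEmpty, mulVec_sub, mulVec_single_one, Pi.sub_apply, col_apply,
    walshMatrix_apply, inter_empty, card_empty, pow_zero]
  split_ifs with hi
  · rw [inter_singleton_of_mem hi, card_singleton]; norm_num
  · rw [inter_singleton_of_notMem hi, card_empty, pow_zero, sub_self]

lemma linearIndependent_singletonSubEmpty :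
    LinearIndependent ℝ (singletonSubEmpty (ι := ι)) := by
  rw [Fintype.linearIndependent_iff]
  intro g hg j
  simpa [singletonSubEmpty, Pi.single_apply] using congrFun hg {j}

lemma ker_vecMulLinear_oddBlockMatrix [Nonempty ι] :
    LinearMap.ker (oddBlockMatrix ι).vecMulLinear =
      Submodule.span ℝ (Set.range (singletonSubEmpty (ι := ι))) := by
  refine le_antisymm (fun c hc => ?_) (Submodule.span_le.mpr ?_)
  · rw [LinearMap.mem_ker, vecMulLinear_apply] at hc
    have hf := eq_sum_singleton_of_sum_parts_eq (walshMatrix_mulVec_empty_eq_zero hc)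
      (sum_parts_walshMatrix_mulVec hc)
    have hc : c = ∑ i, (-(walshMatrix ι *ᵥ c) {i} / 2) • singletonSubEmpty i := by
      refine walshMatrix_mulVec_injective (funext fun W => ?_)
      simp only [mulVec_sum, mulVec_smul, Finset.sum_apply, Pi.smul_apply,
        walshMatrix_mulVec_singletonSubEmpty, smul_eq_mul, mul_ite, mul_zero]
      rw [sum_ite_mem, univ_inter, hf W]
      exact sum_congr rfl fun i _ => by ring
    rw [hc]
    exact Submodule.sum_mem _ fun i _ => Submodule.smul_mem _ _ (Submodule.subset_span ⟨i, rfl⟩)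
  · rintro _ ⟨i, rfl⟩
    exact singletonSubEmpty_vecMul_oddBlockMatrix i

lemma Matrix.rank_add_finrank_ker_vecMulLinear {m n K : Type*} [Fintype m] [Fintype n] [Field K]
    (A : Matrix m n K) :
    A.rank + Module.finrank K (LinearMap.ker A.vecMulLinear) = Fintype.card m := by
  rw [← rank_transpose, rank, mulVecLin_transpose, LinearMap.finrank_range_add_finrank_ker,
    Module.finrank_fintype_fun_eq_card]

theorem rank_oddBlockMatrix [Nonempty ι] :
    (oddBlockMatrix ι).rank = 2 ^ Fintype.card ι - Fintype.card ι := by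
  have h := (oddBlockMatrix ι).rank_add_finrank_ker_vecMulLinear
  rw [ker_vecMulLinear_oddBlockMatrix, finrank_span_eq_card linearIndependent_singletonSubEmpty,
    Fintype.card_finset] at h
  omega

end Kernel

/-- the 0-1 matrix with rows indexed by subsets `S ⊆ [n]` and columns by
partitions `σ ∈ B_n`, with entry `1` iff the restriction `σ_S` has at most one odd-sized
block, has rank `2^n - n`. -/
theorem rank_odd_block_matrix (n : ℕ) (hn : 1 ≤ n) :
    Matrix.rank (fun (S : Finset (Fin n)) (σ : Finpartition (univ : Finset (Fin n))) =>
      if (σ.parts.filter fun B => Odd (B ∩ S).card).card ≤ 1 then (1:ℝ) else 0)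
      = 2 ^ n - n := by
  have : Nonempty (Fin n) := ⟨⟨0, hn⟩⟩
  have h := rank_oddBlockMatrix (ι := Fin n)
  rw [Fintype.card_fin] at h
  exact h
end

section
/- Let n ≥ 1, let S ⊆ [n] have odd cardinality, and let ν : {0,1}^n → ℝ satisfy ν(ρ) = ν(1−ρ) for all ρ ∈ {0,1}^n. Then Σ_{T ⊆ S} (−2)^{|T|} ν(1^T) = 0. -/
/-!
Exchanging the two sums, `ν ρ` is weighted by `∑_{T ⊆ S ∩ ρ⁻¹(1)} (-2)^|T| = (1 - 2)^|S ∩ ρ⁻¹(1)|`.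
When `|S|` is odd, complementing `ρ` changes the parity of `|S ∩ ρ⁻¹(1)|`, so this sign flips while
`ν ρ` does not; the involution `ρ ↦ 1 - ρ` therefore cancels the sum in pairs.
-/

open Finset

/- The decidability instance is a parameter so that the lemma also rewrites sums over `Fin n → Bool`,
whose filter is decided by `Nat.decidableForallFin` rather than `Fintype.decidableForallFintype`. -/
theorem sum_powerset_mul_sum_filter_forall {ι R : Type*} [Fintype ι] [DecidableEq ι]
    [∀ T : Finset ι, DecidablePred fun ρ : ι → Bool => ∀ i ∈ T, ρ i = true] [CommSemiring R]
    (S : Finset ι) (c : Finset ι → R) (ν : (ι → Bool) → R) :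
    ∑ T ∈ S.powerset, c T * ∑ ρ ∈ univ.filter (fun ρ : ι → Bool => ∀ i ∈ T, ρ i = true), ν ρ =
      ∑ ρ : ι → Bool, (∑ T ∈ (S.filter fun i => ρ i = true).powerset, c T) * ν ρ := by
  simp_rw [mul_sum, sum_mul]
  refine sum_comm' fun T ρ => ?_
  simp only [mem_powerset, mem_filter, mem_univ, true_and, subset_iff]
  grind

theorem sum_powerset_neg_two_pow {ι R : Type*} [CommRing R] (A : Finset ι) :
    ∑ T ∈ A.powerset, (-2 : R) ^ #T = (-1) ^ #A := by
  simpa [show (-2 + 1 : R) = -1 by norm_num] using sum_pow_mul_eq_add_pow (-2 : R) 1 A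

theorem neg_one_pow_card_filter_not {ι R : Type*} [Ring R] {S : Finset ι} (hS : Odd #S)
    (p : ι → Prop) [DecidablePred p] :
    (-1 : R) ^ #(S.filter fun i => ¬p i) = -(-1) ^ #(S.filter p) := by
  have hsum : (-1 : R) ^ #(S.filter p) * (-1) ^ #(S.filter fun i => ¬p i) = -1 := by
    rw [← pow_add, card_filter_add_card_filter_not, hS.neg_one_pow]
  calc (-1 : R) ^ #(S.filter fun i => ¬p i)
      = ((-1) ^ #(S.filter p)) ^ 2 * (-1) ^ #(S.filter fun i => ¬p i) := by
        rw [← pow_mul, pow_mul', neg_one_sq, one_pow, one_mul]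
    _ = -(-1) ^ #(S.filter p) := by rw [sq, mul_assoc, hsum, mul_neg_one]

theorem Function.Involutive.sum_eq_zero_of_comp_eq_neg {α R : Type*} [Fintype α] [Ring R]
    [NoZeroDivisors R] [CharZero R] {σ : α → α} (hσ : σ.Involutive) {f : α → R}
    (hf : ∀ a, f (σ a) = -f a) : ∑ a, f a = 0 := by
  have h : ∑ a, f a = -∑ a, f a :=
    calc ∑ a, f a = ∑ a, f (σ a) := (Equiv.sum_comp (hσ.toPerm σ) f).symm
      _ = -∑ a, f a := by simp only [hf, sum_neg_distrib]
  exact CharZero.eq_neg_self_iff.mp h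

theorem odd_rows_zero_general (n : ℕ) (S : Finset (Fin n)) (hS : Odd S.card)
    (ν : (Fin n → Bool) → ℝ)
    (hsym : ∀ ρ : Fin n → Bool, ν ρ = ν (fun i => !(ρ i))) :
    ∑ T ∈ S.powerset, (-2:ℝ) ^ T.card *
      (∑ ρ ∈ univ.filter (fun ρ : Fin n → Bool => ∀ i ∈ T, ρ i = true), ν ρ) = 0 := by
  rw [sum_powerset_mul_sum_filter_forall]
  simp only [sum_powerset_neg_two_pow]
  refine Function.Involutive.sum_eq_zero_of_comp_eq_neg (σ := fun ρ i => !(ρ i))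
    (fun ρ => funext fun i => Bool.not_not (ρ i)) fun ρ => ?_
  simp only [Bool.not_eq_true', ← Bool.not_eq_true]
  rw [neg_one_pow_card_filter_not hS, ← hsym, neg_mul]

/-- if `|S|` is odd and `ν` is `{0,1}`-symmetric, then
`Σ_{T ⊆ S} (-2)^{|T|} ν(1^T) = 0`. -/
theorem odd_rows_zero (n : ℕ) (hn : 1 ≤ n) (S : Finset (Fin n)) (hS : Odd S.card)
    (ν : (Fin n → Bool) → ℝ)
    (hsym : ∀ ρ : Fin n → Bool, ν ρ = ν (fun i => !(ρ i))) :
    ∑ T ∈ S.powerset, (-2:ℝ) ^ T.card *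
      (∑ ρ ∈ univ.filter (fun ρ : Fin n → Bool => ∀ i ∈ T, ρ i = true), ν ρ) = 0 :=
  odd_rows_zero_general n S hS ν hsym
end

section
/- Let n ≥ 1, let σ ∈ B_n be a partition of [n], and let S ⊆ [n]. Then Σ_{S' ⊆ S} (−1/2)^{|S|−|S'|} · 2^{−‖σ_{S'}‖} equals 2^{−|S|} if every block of the restriction σ_S has even cardinality, and equals 0 otherwise. -/
/-!
Write `S' ⊆ S` as the disjoint union of its pieces `B ∩ S'` over the blocks `B` of `σ`. Both
`(-1/2)^(|S| - |S'|)` and `2^(-‖σ_{S'}‖)` are products over the blocks, so the sum factorizes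
into `∏_B ∑_{T ⊆ B ∩ S} (-1/2)^(|B ∩ S| - |T|) 2^(-[T ≠ ∅])`. With `m = |B ∩ S|` the factor
is `(1/2)(1/2)^m + (1/2)(-1/2)^m`, which is `2^(-m)` for even `m` and `0` for odd `m`.
-/

open Finset

namespace Finset

variable {α : Type*}

theorem sum_powerset_pow_mul_ite_nonempty {R : Type*} [CommRing R] (C : Finset α) (x y : R) :
    ∑ u ∈ C.powerset, x ^ (#C - #u) * (if u.Nonempty then y else 1)
      = y * (1 + x) ^ #C + (1 - y) * x ^ #C := by
  classical
  have hsplit : ∀ u : Finset α,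
      (if u.Nonempty then y else 1) = y + (if u = ∅ then 1 - y else 0) := by
    intro u
    rcases u.eq_empty_or_nonempty with rfl | hu
    · simp
    · simp [hu, hu.ne_empty]
  simp only [hsplit, mul_add, sum_add_distrib]
  rw [← sum_mul, ← sum_pow_mul_eq_add_pow]
  simp [mul_comm]

theorem sum_powerset_neg_half_pow (C : Finset α) :
    ∑ u ∈ C.powerset, (-(1:ℝ)/2) ^ (#C - #u) * (if u.Nonempty then 2⁻¹ else 1)
      = if Even #C then (2:ℝ)⁻¹ ^ #C else 0 := by
  rw [sum_powerset_pow_mul_ite_nonempty, neg_div, show (1:ℝ) / 2 = 2⁻¹ by norm_num]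
  rcases Nat.even_or_odd #C with h | h
  · rw [if_pos h, h.neg_pow]; ring
  · rw [if_neg (Nat.not_even_iff_odd.2 h), h.neg_pow]; ring

end Finset

namespace Finpartition

variable {α : Type*} [DecidableEq α] {a s : Finset α}

theorem sum_card_inter_s16 (P : Finpartition a) (hs : s ⊆ a) :
    ∑ B ∈ P.parts, #(B ∩ s) = #s := by
  rw [← (P.restrict hs).sum_card_parts, P.sum_restrict hs card card_empty]
  rfl

-- `t ↦ (B ∩ t)_B` identifies the subsets of `s` with the families of subsets of the `B ∩ s`.
theorem sum_powerset_prod_inter {R : Type*} [CommSemiring R] (P : Finpartition a) (hs : s ⊆ a)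
    (f : Finset α → Finset α → R) :
    ∑ t ∈ s.powerset, ∏ B ∈ P.parts, f B (B ∩ t)
      = ∏ B ∈ P.parts, ∑ u ∈ (B ∩ s).powerset, f B u := by
  rw [prod_sum]
  refine sum_bij' (fun t _ B _ => B ∩ t) (fun p _ => P.parts.attach.biUnion fun B => p B.1 B.2)
    ?_ ?_ ?_ ?_ ?_
  · intro t ht
    simp only [mem_pi, mem_powerset] at ht ⊢
    exact fun B _ => inter_subset_inter_left ht
  · intro p hp
    simp only [mem_pi, mem_powerset] at hp ⊢
    exact biUnion_subset.2 fun B _ => (hp B.1 B.2).trans inter_subset_right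
  · intro t ht
    ext x
    simp only [mem_biUnion, mem_attach, mem_inter, true_and, Subtype.exists]
    refine ⟨fun ⟨_, _, _, hx⟩ => hx, fun hx => ?_⟩
    obtain ⟨B, hB, hxB⟩ := P.exists_mem (hs (mem_powerset.1 ht hx))
    exact ⟨B, hB, hxB, hx⟩
  · intro p hp
    simp only [mem_pi, mem_powerset] at hp
    funext B hB
    ext x
    simp only [mem_inter, mem_biUnion, mem_attach, true_and, Subtype.exists]
    refine ⟨fun ⟨hxB, B', hB', hx⟩ => ?_,
      fun hx => ⟨(hp B hB).trans inter_subset_left hx, B, hB, hx⟩⟩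
    obtain rfl := P.eq_of_mem_parts hB hB' hxB ((hp B' hB').trans inter_subset_left hx)
    exact hx
  · intro t _
    exact (prod_attach P.parts fun B => f B (B ∩ t)).symm

end Finpartition

theorem sum_even_blocks_general (n : ℕ) (σ : Finpartition (univ : Finset (Fin n)))
    (S : Finset (Fin n)) :
    ∑ S' ∈ S.powerset, (-(1:ℝ)/2) ^ (S.card - S'.card) * (2:ℝ)⁻¹ ^ numBlocksOn σ S'
      = if ∀ B ∈ σ.parts, Even (B ∩ S).card then (2:ℝ)⁻¹ ^ S.card else 0 := by
  have hS := subset_univ S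
  have hsummand : ∀ S' ∈ S.powerset,
      (-(1:ℝ)/2) ^ (#S - #S') * (2:ℝ)⁻¹ ^ numBlocksOn σ S'
        = ∏ B ∈ σ.parts, (-(1:ℝ)/2) ^ (#(B ∩ S) - #(B ∩ S')) *
            (if (B ∩ S').Nonempty then 2⁻¹ else 1) := by
    intro S' hS'
    have hS'S := mem_powerset.1 hS'
    rw [numBlocksOn, prod_mul_distrib, prod_pow_eq_pow_sum, prod_ite, prod_const, prod_const_one,
      mul_one,
      sum_tsub_distrib _ fun B _ => card_le_card (inter_subset_inter_left hS'S),
      σ.sum_card_inter_s16 hS, σ.sum_card_inter_s16 (hS'S.trans hS)]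
  rw [sum_congr rfl hsummand, σ.sum_powerset_prod_inter hS
    (fun B u => (-(1:ℝ)/2) ^ (#(B ∩ S) - #u) * (if u.Nonempty then 2⁻¹ else 1))]
  simp only [sum_powerset_neg_half_pow, prod_ite_zero, prod_pow_eq_pow_sum, σ.sum_card_inter_s16 hS]

/-- `Σ_{S' ⊆ S} (-1/2)^{|S|-|S'|} 2^{-‖σ_{S'}‖}` equals `2^{-|S|}` if every
block of `σ_S` has even size, and `0` otherwise. -/
theorem sum_even_blocks (n : ℕ) (hn : 1 ≤ n) (σ : Finpartition (univ : Finset (Fin n)))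
    (S : Finset (Fin n)) :
    ∑ S' ∈ S.powerset, (-(1:ℝ)/2) ^ (S.card - S'.card) * (2:ℝ)⁻¹ ^ numBlocksOn σ S'
      = if ∀ B ∈ σ.parts, Even (B ∩ S).card then (2:ℝ)⁻¹ ^ S.card else 0 :=
  sum_even_blocks_general n σ S
end

section
/- Let n ≥ 1, let σ ∈ B_n be a partition of [n], and let S ⊆ [n]. Then Σ_{S' ⊆ S} (−1/2)^{|S|−|S'|} · ‖σ_{S'}‖ · 2^{−‖σ_{S'}‖+1} equals 2^{−|S|+1} if the restriction σ_S has exactly one block of odd cardinality, and equals 0 otherwise. -/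
/-!
The generating polynomial `F(x) = ∑_{S' ⊆ S} (-1/2)^{|S| - |S'|} x^{‖σ_{S'}‖}` factors over
the blocks `B` of `σ`: the factor of `B` is
`∑_{T ⊆ B ∩ S} (-1/2)^{|B ∩ S| - |T|} x^{[T ≠ ∅]} = 2^{-|B ∩ S|} · (2x - 1 or 1)`,
according as `|B ∩ S|` is odd or even. Hence `F(x) = 2^{-|S|} (2x - 1)^m`, where `m` is the number
of blocks meeting `S` in an odd number of points, and the sum in question is `F'(1/2)`.
-/

open Finset

section General

variable {α : Type*} [DecidableEq α]

theorem sum_powerset_union_of_disjoint {M : Type*} [AddCommMonoid M] {A C : Finset α}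
    (h : Disjoint A C) (f : Finset α → M) :
    ∑ S ∈ (A ∪ C).powerset, f S
      = ∑ T ∈ A.powerset, ∑ U ∈ C.powerset, f (T ∪ U) := by
  induction A using Finset.induction_on generalizing f with
  | empty => simp
  | insert a A ha ih =>
    have haC : a ∉ C := disjoint_left.mp h (mem_insert_self a A)
    have hAC : Disjoint A C := h.mono_left (subset_insert a A)
    rw [insert_union, sum_powerset_insert (by simp [ha, haC]), sum_powerset_insert ha,
      ih hAC, ih hAC]
    simp only [insert_union]

theorem card_filter_eq_ite_add {P : Finset α} {a : α} (ha : a ∈ P) {p q : α → Prop}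
    [DecidablePred p] [DecidablePred q] (hpq : ∀ b ∈ P, b ≠ a → (p b ↔ q b))
    (hqa : ¬ q a) :
    #(P.filter p) = (if p a then 1 else 0) + #(P.filter q) := by
  rw [card_filter, card_filter, ← add_sum_erase _ _ ha, ← add_sum_erase P _ ha, if_neg hqa,
    zero_add]
  congr 1
  exact sum_congr rfl fun b hb =>
    if_congr (hpq b (mem_of_mem_erase hb) (ne_of_mem_erase hb)) rfl rfl

theorem sum_powerset_pow_card_sub_mul_pow_ite_nonempty {R : Type*} [CommRing R] (A : Finset α)
    (r x : R) :
    ∑ T ∈ A.powerset, r ^ (#A - #T) * x ^ (if T.Nonempty then 1 else 0)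
      = x * (1 + r) ^ #A + (1 - x) * r ^ #A := by
  have hx : ∀ T : Finset α,
      x ^ (if T.Nonempty then 1 else 0) = x + if T = ∅ then 1 - x else 0 := by
    intro T
    rcases T.eq_empty_or_nonempty with rfl | hT
    · simp
    · simp [hT, hT.ne_empty]
  have hbinom := sum_pow_mul_eq_add_pow (1 : R) r A
  simp only [one_pow, one_mul] at hbinom
  simp only [hx, mul_add, sum_add_distrib, ← sum_mul, hbinom, mul_ite, mul_zero, sum_ite_eq',
    empty_mem_powerset, if_true, card_empty, Nat.sub_zero]
  ring

end General

section Blocks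

variable {n : ℕ} (σ : Finpartition (univ : Finset (Fin n)))

def numOddBlocksOn (S : Finset (Fin n)) : ℕ :=
  #(σ.parts.filter fun B => Odd #(B ∩ S))

variable {σ}

theorem numBlocksOn_union {B T U : Finset (Fin n)} (hB : B ∈ σ.parts) (hT : T ⊆ B)
    (hU : Disjoint B U) :
    numBlocksOn σ (T ∪ U) = (if T.Nonempty then 1 else 0) + numBlocksOn σ U := by
  have hBU : B ∩ U = ∅ := disjoint_iff_inter_eq_empty.mp hU
  have hBTU : B ∩ (T ∪ U) = T := by
    rw [inter_union_distrib_left, inter_eq_right.mpr hT, hBU, union_empty]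
  unfold numBlocksOn
  rw [card_filter_eq_ite_add (q := fun B' => (B' ∩ U).Nonempty) hB (fun B' hB' hne => ?_)
    (by simp [hBU]), hBTU]
  have hB'T : B' ∩ T = ∅ :=
    disjoint_iff_inter_eq_empty.mp ((σ.disjoint hB' hB hne).mono_right hT)
  rw [inter_union_distrib_left, hB'T, empty_union]

theorem numOddBlocksOn_eq {B : Finset (Fin n)} (hB : B ∈ σ.parts) (S : Finset (Fin n)) :
    numOddBlocksOn σ S = (if Odd #(B ∩ S) then 1 else 0) + numOddBlocksOn σ (S \ B) := by
  refine card_filter_eq_ite_add hB (fun B' hB' hne => ?_) (by simp)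
  have hd : Disjoint (B' ∩ S) B := (σ.disjoint hB' hB hne).mono_left inter_subset_left
  rw [← inter_sdiff_assoc, sdiff_eq_self_of_disjoint hd]

theorem sum_powerset_mul_pow_numBlocksOn (S : Finset (Fin n)) (x : ℝ) :
    ∑ S' ∈ S.powerset, (-(1:ℝ)/2) ^ (#S - #S') * x ^ numBlocksOn σ S'
      = (2:ℝ)⁻¹ ^ #S * (2 * x - 1) ^ numOddBlocksOn σ S := by
  induction S using Finset.strongInduction with
  | _ S ih =>
  rcases S.eq_empty_or_nonempty with rfl | ⟨s, hs⟩
  · simp [numBlocksOn, numOddBlocksOn]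
  obtain ⟨B, hB, hsB⟩ := σ.exists_mem (mem_univ s)
  set A := B ∩ S
  set C := S \ B
  have hAC : Disjoint A C := disjoint_sdiff_self_right.mono_left inter_subset_left
  have hBC : Disjoint B C := disjoint_sdiff
  have hS : A ∪ C = S := by
    rw [union_comm, show A = S ∩ B from inter_comm B S]; exact sdiff_union_inter S B
  have hCS : C ⊂ S :=
    (ssubset_iff_of_subset sdiff_subset).mpr ⟨s, hs, fun h => (mem_sdiff.mp h).2 hsB⟩
  have hcard : #S = #A + #C := by rw [← hS, card_union_of_disjoint hAC]
  have hblock : ∑ T ∈ A.powerset, (-(1:ℝ)/2) ^ (#A - #T) * x ^ (if T.Nonempty then 1 else 0)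
      = (2:ℝ)⁻¹ ^ #A * (2 * x - 1) ^ (if Odd #A then 1 else 0) := by
    rw [sum_powerset_pow_card_sub_mul_pow_ite_nonempty, show 1 + -(1:ℝ)/2 = 2⁻¹ by norm_num,
      show -(1:ℝ)/2 = -1 * 2⁻¹ by norm_num, mul_pow]
    rcases Nat.even_or_odd #A with hA | hA
    · rw [hA.neg_one_pow, if_neg (Nat.not_odd_iff_even.mpr hA)]; ring
    · rw [hA.neg_one_pow, if_pos hA]; ring
  calc ∑ S' ∈ S.powerset, (-(1:ℝ)/2) ^ (#S - #S') * x ^ numBlocksOn σ S'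
      = ∑ T ∈ A.powerset, ∑ U ∈ C.powerset,
          ((-(1:ℝ)/2) ^ (#A - #T) * x ^ (if T.Nonempty then 1 else 0)) *
          ((-(1:ℝ)/2) ^ (#C - #U) * x ^ numBlocksOn σ U) := by
        rw [← hS, sum_powerset_union_of_disjoint hAC]
        refine sum_congr rfl fun T hT => sum_congr rfl fun U hU => ?_
        rw [mem_powerset] at hT hU
        rw [numBlocksOn_union hB (hT.trans inter_subset_left) (hBC.mono_right hU),
          card_union_of_disjoint hAC, card_union_of_disjoint (hAC.mono hT hU),
          show #A + #C - (#T + #U) = (#A - #T) + (#C - #U) by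
            have := card_le_card hT; have := card_le_card hU; omega]
        ring
    _ = (2:ℝ)⁻¹ ^ #S * (2 * x - 1) ^ numOddBlocksOn σ S := by
        rw [← sum_mul_sum, hblock, ih C hCS, numOddBlocksOn_eq hB S, hcard, pow_add,
          pow_add]
        ring

end Blocks

theorem hasDerivAt_pow_inv_two (k : ℕ) :
    HasDerivAt (fun x : ℝ => x ^ k) (k * ((2:ℝ)⁻¹ ^ k * 2)) 2⁻¹ := by
  refine (hasDerivAt_pow k (2:ℝ)⁻¹).congr_deriv ?_
  cases k with
  | zero => simp
  | succ k => rw [pow_succ, Nat.add_sub_cancel]; ring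

theorem sum_one_odd_block_general (n : ℕ) (σ : Finpartition (univ : Finset (Fin n)))
    (S : Finset (Fin n)) :
    ∑ S' ∈ S.powerset, (-(1:ℝ)/2) ^ (S.card - S'.card) *
        ((numBlocksOn σ S' : ℝ) * ((2:ℝ)⁻¹ ^ numBlocksOn σ S' * 2))
      = if (σ.parts.filter fun B => Odd (B ∩ S).card).card = 1
          then (2:ℝ)⁻¹ ^ S.card * 2 else 0 := by
  change _ = if numOddBlocksOn σ S = 1 then _ else _
  have hlhs := HasDerivAt.fun_sum (u := S.powerset) fun S' _ =>
    (hasDerivAt_pow_inv_two (numBlocksOn σ S')).const_mul ((-(1:ℝ)/2) ^ (#S - #S'))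
  simp only [sum_powerset_mul_pow_numBlocksOn] at hlhs
  have hrhs := (((hasDerivAt_id (2:ℝ)⁻¹).const_mul 2).sub_const 1).pow
    (numOddBlocksOn σ S) |>.const_mul ((2:ℝ)⁻¹ ^ #S)
  rw [hlhs.unique hrhs]
  rcases numOddBlocksOn σ S with _ | _ | m <;> simp

/-- `Σ_{S' ⊆ S} (-1/2)^{|S|-|S'|} ‖σ_{S'}‖ 2^{-‖σ_{S'}‖+1}` equals
`2^{-|S|+1}` if `σ_S` has exactly one odd-sized block, and `0` otherwise. -/
theorem sum_one_odd_block (n : ℕ) (hn : 1 ≤ n) (σ : Finpartition (univ : Finset (Fin n)))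
    (S : Finset (Fin n)) :
    ∑ S' ∈ S.powerset, (-(1:ℝ)/2) ^ (S.card - S'.card) *
        ((numBlocksOn σ S' : ℝ) * ((2:ℝ)⁻¹ ^ numBlocksOn σ S' * 2))
      = if (σ.parts.filter fun B => Odd (B ∩ S).card).card = 1
          then (2:ℝ)⁻¹ ^ S.card * 2 else 0 :=
  sum_one_odd_block_general n σ S
end

section
/- Fix J > 0. The linear system in (q_1, q_2, q_3) ∈ ℝ³ given by: q_1 + q_2 + q_3 = 1; q_1/2 + q_2/3 + q_3/4 = (e^{3J} + e^{−J}) / (2e^{3J} + 6e^{−J}); q_1 + q_2 + (3/4) q_3 = 3e^{3J} / (3e^{3J} + e^{−J}), has a unique solution; this solution satisfies q_1 > 0, q_2 > 0, q_3 > 0, and moreover q_2 = 12(e^{4J} − 1) / ((3 + e^{4J})(1 + 3e^{4J})). -/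
/-!
Eliminating in the system `x + y + z = a`, `x/2 + y/3 + z/4 = b`, `x + y + 3z/4 = c` gives
`x = 6b - 2c`, `y = 6c - 3a - 6b`, `z = 4a - 4c`, so it has exactly one solution for every
right-hand side. Dividing numerators and denominators by `e^{-J}` turns the right-hand sides of
the Ising system into `(t + 1)/(2t + 6)` and `3t/(3t + 1)` with `t = e^{4J}`, and the solution
becomes `(3(t - 1)², 12(t - 1), 4(t + 3)) / ((t + 3)(3t + 1))`, which is positive for `t > 1`.
-/

open Real

section TriangleSystem

variable {K : Type*} [Field K] [CharZero K]

def TriangleSystem (a b c : K) (q : K × K × K) : Prop :=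
  q.1 + q.2.1 + q.2.2 = a ∧ q.1 / 2 + q.2.1 / 3 + q.2.2 / 4 = b ∧ q.1 + q.2.1 + 3 * q.2.2 / 4 = c

def triangleSolution (a b c : K) : K × K × K :=
  (6 * b - 2 * c, 6 * c - 3 * a - 6 * b, 4 * a - 4 * c)

theorem triangleSystem_iff {a b c : K} {q : K × K × K} :
    TriangleSystem a b c q ↔ q = triangleSolution a b c := by
  obtain ⟨x, y, z⟩ := q
  simp only [TriangleSystem, triangleSolution, Prod.mk.injEq]
  constructor
  · rintro ⟨h₁, h₂, h₃⟩
    refine ⟨?_, ?_, ?_⟩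
    · linear_combination 6 * h₂ - 2 * h₃
    · linear_combination 6 * h₃ - 3 * h₁ - 6 * h₂
    · linear_combination 4 * h₁ - 4 * h₃
  · rintro ⟨rfl, rfl, rfl⟩
    refine ⟨?_, ?_, ?_⟩ <;> ring

theorem existsUnique_triangleSystem (a b c : K) : ∃! q, TriangleSystem a b c q :=
  ⟨triangleSolution a b c, triangleSystem_iff.2 rfl, fun _ hq => triangleSystem_iff.1 hq⟩

end TriangleSystem

theorem exp_three_mul_eq (J : ℝ) : exp (3 * J) = exp (4 * J) * exp (-J) := by
  rw [← exp_add]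
  ring_nf

theorem exp_div_eq_ising_edge (J : ℝ) :
    (exp (3 * J) + exp (-J)) / (2 * exp (3 * J) + 6 * exp (-J))
      = (exp (4 * J) + 1) / (2 * exp (4 * J) + 6) := by
  rw [exp_three_mul_eq, ← mul_div_mul_right (exp (4 * J) + 1) _ (exp_pos (-J)).ne']
  congr 1 <;> ring

theorem exp_div_eq_ising_triangle (J : ℝ) :
    3 * exp (3 * J) / (3 * exp (3 * J) + exp (-J)) = 3 * exp (4 * J) / (3 * exp (4 * J) + 1) := by
  rw [exp_three_mul_eq, ← mul_div_mul_right (3 * exp (4 * J)) _ (exp_pos (-J)).ne']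
  congr 1 <;> ring

theorem triangleSolution_ising_eq {t : ℝ} (ht : 0 < t) :
    triangleSolution 1 ((t + 1) / (2 * t + 6)) (3 * t / (3 * t + 1))
      = (3 * (t - 1) ^ 2 / ((3 + t) * (1 + 3 * t)), 12 * (t - 1) / ((3 + t) * (1 + 3 * t)),
          4 / (3 * t + 1)) := by
  simp only [triangleSolution, Prod.mk.injEq]
  refine ⟨?_, ?_, ?_⟩ <;> field_simp <;> ring

/-- for `J > 0`, the 3×3 linear system arising from the small-field limit of
the Ising model on a triangle has a unique solution; it is strictly positive and its second
coordinate equals `12(e^{4J}-1)/((3+e^{4J})(1+3e^{4J}))`. -/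
theorem ising_triangle_limit_system (J : ℝ) (hJ : 0 < J) :
    (∃! q : ℝ × ℝ × ℝ,
      q.1 + q.2.1 + q.2.2 = 1 ∧
      q.1 / 2 + q.2.1 / 3 + q.2.2 / 4
        = (exp (3 * J) + exp (-J)) / (2 * exp (3 * J) + 6 * exp (-J)) ∧
      q.1 + q.2.1 + 3 * q.2.2 / 4 = 3 * exp (3 * J) / (3 * exp (3 * J) + exp (-J))) ∧
    ∀ q : ℝ × ℝ × ℝ,
      (q.1 + q.2.1 + q.2.2 = 1 ∧
        q.1 / 2 + q.2.1 / 3 + q.2.2 / 4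
          = (exp (3 * J) + exp (-J)) / (2 * exp (3 * J) + 6 * exp (-J)) ∧
        q.1 + q.2.1 + 3 * q.2.2 / 4 = 3 * exp (3 * J) / (3 * exp (3 * J) + exp (-J))) →
      0 < q.1 ∧ 0 < q.2.1 ∧ 0 < q.2.2 ∧
        q.2.1 = 12 * (exp (4 * J) - 1) / ((3 + exp (4 * J)) * (1 + 3 * exp (4 * J))) := by
  change (∃! q, TriangleSystem 1 _ _ q) ∧ ∀ q, TriangleSystem 1 _ _ q → _
  rw [exp_div_eq_ising_edge, exp_div_eq_ising_triangle]
  refine ⟨existsUnique_triangleSystem _ _ _, fun q hq => ?_⟩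
  rw [triangleSystem_iff.1 hq, triangleSolution_ising_eq (exp_pos _)]
  have ht : 1 < exp (4 * J) := one_lt_exp_iff.2 (by positivity)
  have hden : 0 < (3 + exp (4 * J)) * (1 + 3 * exp (4 * J)) := by positivity
  refine ⟨div_pos ?_ hden, div_pos ?_ hden, by positivity, rfl⟩
  · have : exp (4 * J) - 1 ≠ 0 := by linarith
    positivity
  · linarith
end

section
/- For every real J > 0, one has 12(e^{4J} − 1) / ((3 + e^{4J})(1 + 3e^{4J})) < 6e^{−2J}(e^{2J} − 1) / (3 + e^{4J}). -/
open Real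

/-! With `x = e^{2J} > 1` both sides share the positive factor `6(x - 1)/(3 + x²)`, and the
remaining factors compare as `2(x + 1)/(1 + 3x²) < 1/x`, which is `0 < (x - 1)²`. -/

lemma two_mul_add_one_div_lt_inv {x : ℝ} (hx : 0 < x) (hx1 : x ≠ 1) :
    2 * (x + 1) / (1 + 3 * x ^ 2) < x⁻¹ := by
  have hsq : 0 < (x - 1) ^ 2 := sq_pos_of_ne_zero (sub_ne_zero.mpr hx1)
  rw [div_lt_iff₀ (by positivity), inv_mul_eq_div, lt_div_iff₀ hx]
  nlinarith

/-- for every `J > 0`,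
`12(e^{4J}-1)/((3+e^{4J})(1+3e^{4J})) < 6e^{-2J}(e^{2J}-1)/(3+e^{4J})`. -/
theorem limit_ne_rcm (J : ℝ) (hJ : 0 < J) :
    12 * (exp (4 * J) - 1) / ((3 + exp (4 * J)) * (1 + 3 * exp (4 * J)))
      < 6 * exp (-2 * J) * (exp (2 * J) - 1) / (3 + exp (4 * J)) := by
  set x := exp (2 * J) with hx_def
  have hx : 1 < x := one_lt_exp_iff.mpr (by linarith)
  have hx4 : exp (4 * J) = x ^ 2 := by rw [hx_def, ← exp_nat_mul]; ring_nf
  have hx_inv : exp (-2 * J) = x⁻¹ := by rw [hx_def, ← exp_neg]; ring_nf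
  have hfactor : 0 < 6 * (x - 1) / (3 + x ^ 2) := by
    have : 0 < x - 1 := by linarith
    positivity
  calc 12 * (exp (4 * J) - 1) / ((3 + exp (4 * J)) * (1 + 3 * exp (4 * J)))
      = 6 * (x - 1) / (3 + x ^ 2) * (2 * (x + 1) / (1 + 3 * x ^ 2)) := by
        rw [hx4]; field_simp; ring
    _ < 6 * (x - 1) / (3 + x ^ 2) * x⁻¹ :=
        mul_lt_mul_of_pos_left (two_mul_add_one_div_lt_inv (by linarith) hx.ne') hfactor
    _ = 6 * exp (-2 * J) * (exp (2 * J) - 1) / (3 + exp (4 * J)) := by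
        rw [hx4, hx_inv]; ring
end
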